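/- arXiv:math/0402067 — 4 statements merged into one kernel-verified Lean document; each statement's English description precedes it below -/
import Mathlib

section
/- The map Z ↦ ∫_{ℝ^m} exp(−½ vᵀZv) dv is holomorphic (complex differentiable) on the open set of complex symmetric m×m matrices Z whose real part is positive definite. -/
set_option maxHeartbeats 1000000
set_option maxSynthPendingDepth 3
set_option synthInstance.maxHeartbeats 400000

open Matrix MeasureTheory

attribute [local instance] Matrix.normedAddCommGroup Matrix.normedSpace

/-- The complex vector space of complex symmetric `m×m` matrices. -/
noncomputable def symMatrices (m : ℕ) : Submodule ℂ (Matrix (Fin m) (Fin m) ℂ) where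
  carrier := {Z | Zᵀ = Z}
  add_mem' := by
    intro a b ha hb
    simp only [Set.mem_setOf_eq] at *
    rw [Matrix.transpose_add, ha, hb]
  zero_mem' := by simp
  smul_mem' := by
    intro c Z hZ
    simp only [Set.mem_setOf_eq] at *
    rw [Matrix.transpose_smul, hZ]

noncomputable instance symCLMNormedAddCommGroup (m : ℕ) :
    NormedAddCommGroup (symMatrices m →L[ℂ] ℂ) :=
  ContinuousLinearMap.toNormedAddCommGroup (𝕜 := ℂ) (𝕜₂ := ℂ) (σ₁₂ := RingHom.id ℂ)

noncomputable instance symCLMNormedSpace (m : ℕ) : NormedSpace ℂ (symMatrices m →L[ℂ] ℂ) :=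
  ContinuousLinearMap.toNormedSpace (𝕜 := ℂ) (𝕜₂ := ℂ) (𝕜' := ℂ) (σ₁₂ := RingHom.id ℂ)

instance symCLMPseudoMetrizable (m : ℕ) :
    TopologicalSpace.PseudoMetrizableSpace (symMatrices m →L[ℂ] ℂ) :=
  ⟨⟨PseudoMetricSpace.toUniformSpace, rfl, inferInstance⟩⟩

noncomputable def coordCLM (m : ℕ) (i j : Fin m) : symMatrices m →L[ℂ] ℂ :=
  LinearMap.toContinuousLinearMap
    { toFun := fun Z => (Z : Matrix (Fin m) (Fin m) ℂ) i j
      map_add' := fun _ _ => rfl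
      map_smul' := fun _ _ => rfl }

lemma coordCLM_apply (m : ℕ) (i j : Fin m) (Z : symMatrices m) :
    coordCLM m i j Z = (Z : Matrix (Fin m) (Fin m) ℂ) i j := rfl

noncomputable def Lv (m : ℕ) (v : Fin m → ℝ) : symMatrices m →L[ℂ] ℂ :=
  ∑ i, ∑ j, (((v i * v j : ℝ) : ℂ)) • coordCLM m i j

lemma Lv_apply (m : ℕ) (v : Fin m → ℝ) (Z : symMatrices m) :
    Lv m v Z = (fun i => (v i : ℂ)) ⬝ᵥ ((Z : Matrix (Fin m) (Fin m) ℂ) *ᵥ fun i => (v i : ℂ)) := by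
  simp only [Lv, ContinuousLinearMap.sum_apply, ContinuousLinearMap.smul_apply, coordCLM_apply,
    dotProduct, mulVec, Finset.mul_sum, Complex.ofReal_mul, smul_eq_mul]
  refine Finset.sum_congr rfl fun i _ => Finset.sum_congr rfl fun j _ => by ring

lemma Lv_norm_le (m : ℕ) (v : Fin m → ℝ) :
    ‖Lv m v‖ ≤ (m : ℝ) * ∑ i, v i ^ 2 := by
  refine ContinuousLinearMap.opNorm_le_bound _ (by positivity) fun Z => ?_
  calc ‖Lv m v Z‖ ≤ ∑ i, ∑ j, ‖(((v i * v j : ℝ) : ℂ)) * coordCLM m i j Z‖ := by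
        simp only [Lv, ContinuousLinearMap.sum_apply, ContinuousLinearMap.smul_apply,
          smul_eq_mul]
        exact (norm_sum_le _ _).trans (Finset.sum_le_sum fun i _ => norm_sum_le _ _)
    _ ≤ ∑ i, ∑ j, |v i| * |v j| * ‖Z‖ := by
        refine Finset.sum_le_sum fun i _ => Finset.sum_le_sum fun j _ => ?_
        rw [norm_mul, Complex.norm_real, Real.norm_eq_abs, abs_mul]
        refine mul_le_mul_of_nonneg_left ?_ (by positivity)
        exact Matrix.norm_entry_le_entrywise_sup_norm (Z : Matrix (Fin m) (Fin m) ℂ)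
    _ = (∑ i, |v i|) ^ 2 * ‖Z‖ := by
        rw [sq, Finset.sum_mul_sum]
        simp [Finset.sum_mul]
    _ ≤ ((m : ℝ) * ∑ i, v i ^ 2) * ‖Z‖ := by
        refine mul_le_mul_of_nonneg_right ?_ (norm_nonneg _)
        have := sq_sum_le_card_mul_sum_sq (s := Finset.univ) (f := fun i : Fin m => |v i|)
        simpa [sq_abs] using this

lemma Lv_re (m : ℕ) (v : Fin m → ℝ) (Z : symMatrices m) :
    (Lv m v Z).re = v ⬝ᵥ ((Matrix.of fun i j => ((Z : Matrix (Fin m) (Fin m) ℂ) i j).re) *ᵥ v) := by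
  simp only [Lv, ContinuousLinearMap.sum_apply, ContinuousLinearMap.smul_apply, coordCLM_apply,
    smul_eq_mul, Complex.re_sum, Complex.re_ofReal_mul, dotProduct, mulVec, Matrix.of_apply,
    Finset.mul_sum]
  refine Finset.sum_congr rfl fun i _ => Finset.sum_congr rfl fun j _ => by ring

lemma quad_smul {m : ℕ} (M : Matrix (Fin m) (Fin m) ℝ) (c : ℝ) (v : Fin m → ℝ) :
    (c • v) ⬝ᵥ M *ᵥ (c • v) = c ^ 2 * (v ⬝ᵥ M *ᵥ v) := by
  rw [Matrix.mulVec_smul, smul_dotProduct, dotProduct_smul]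
  simp [sq, mul_assoc, smul_eq_mul]

lemma posdef_lower_bound {m : ℕ} (M : Matrix (Fin m) (Fin m) ℝ) (hM : M.PosDef) :
    ∃ δ > 0, ∀ v : Fin m → ℝ, δ * (∑ i, v i ^ 2) ≤ v ⬝ᵥ M *ᵥ v := by
  rcases Nat.eq_zero_or_pos m with hm | hm
  · refine ⟨1, one_pos, fun v => ?_⟩
    subst hm
    simp [dotProduct]
  · have hcont : Continuous fun v : Fin m → ℝ => v ⬝ᵥ M *ᵥ v := by
      simp only [dotProduct, mulVec]
      exact continuous_finset_sum _ fun i _ => (continuous_apply i).mul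
        (continuous_finset_sum _ fun j _ => (continuous_const.mul (continuous_apply j)))
    haveI : Nonempty (Fin m) := ⟨⟨0, hm⟩⟩
    have hsne : (Metric.sphere (0 : Fin m → ℝ) 1).Nonempty :=
      NormedSpace.sphere_nonempty.mpr zero_le_one
    obtain ⟨v₀, hv₀s, hv₀min⟩ := (isCompact_sphere (0 : Fin m → ℝ) 1).exists_isMinOn hsne
      hcont.continuousOn
    have hv₀norm : ‖v₀‖ = 1 := by simpa using hv₀s
    have hv₀ne : v₀ ≠ 0 := by intro h; rw [h] at hv₀norm; simp at hv₀norm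
    set δ' := v₀ ⬝ᵥ M *ᵥ v₀ with hδ'
    have hδ'pos : 0 < δ' := by simpa using hM.dotProduct_mulVec_pos hv₀ne
    refine ⟨δ' / m, div_pos hδ'pos (by exact_mod_cast hm), fun v => ?_⟩
    rcases eq_or_ne v 0 with rfl | hv
    · simp [dotProduct]
    · have hnv : 0 < ‖v‖ := norm_pos_iff.mpr hv
      have hmem : ‖v‖⁻¹ • v ∈ Metric.sphere (0 : Fin m → ℝ) 1 := by
        simp [norm_smul, abs_of_pos (inv_pos.mpr hnv), inv_mul_cancel₀ hnv.ne']
      have h1 : δ' ≤ (‖v‖⁻¹ • v) ⬝ᵥ M *ᵥ (‖v‖⁻¹ • v) := hv₀min hmem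
      rw [quad_smul] at h1
      have h2 : δ' * ‖v‖ ^ 2 ≤ v ⬝ᵥ M *ᵥ v := by
        have := mul_le_mul_of_nonneg_left h1 (le_of_lt (by positivity : (0:ℝ) < ‖v‖ ^ 2))
        rw [← mul_assoc] at this
        rw [mul_comm]
        simpa [inv_pow, mul_inv_cancel₀ (by positivity : (‖v‖ ^ 2) ≠ 0)] using this
      refine le_trans ?_ h2
      have hmpos : (0:ℝ) < m := by exact_mod_cast hm
      have hsum : (∑ i, v i ^ 2) ≤ m * ‖v‖ ^ 2 := by
        calc ∑ i, v i ^ 2 ≤ ∑ _i : Fin m, ‖v‖ ^ 2 := by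
              refine Finset.sum_le_sum fun i _ => ?_
              have h3 : |v i| ≤ ‖v‖ := by
                simpa [Real.norm_eq_abs] using norm_le_pi_norm v i
              calc v i ^ 2 = |v i| ^ 2 := (sq_abs _).symm
                _ ≤ ‖v‖ ^ 2 := by gcongr
          _ = m * ‖v‖ ^ 2 := by simp [mul_comm]
      calc δ' / m * (∑ i, v i ^ 2) ≤ δ' / m * (m * ‖v‖ ^ 2) := by
            exact mul_le_mul_of_nonneg_left hsum (by positivity)
        _ = δ' * ‖v‖ ^ 2 := by field_simp

lemma gaussian_pi_integrable (m : ℕ) {c : ℝ} (hc : 0 < c) :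
    Integrable (fun v : Fin m → ℝ => Real.exp (-c * ∑ i, v i ^ 2)) := by
  have heq : (fun v : Fin m → ℝ => Real.exp (-c * ∑ i, v i ^ 2)) =
      fun v => ∏ i, Real.exp (-c * v i ^ 2) := by
    funext v
    rw [← Real.exp_sum]
    congr 1
    rw [Finset.mul_sum]
  rw [heq]
  exact Integrable.fintype_prod (f := fun (_ : Fin m) (x : ℝ) => Real.exp (-c * x ^ 2))
    fun _ => integrable_exp_neg_mul_sq hc

lemma hasFDerivAt_exp_Lv (m : ℕ) (v : Fin m → ℝ) (Z : symMatrices m) :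
    HasFDerivAt (fun W : symMatrices m => Complex.exp (-(1/2) * Lv m v W))
      (Complex.exp (-(1/2) * Lv m v Z) • ((-(1/2) : ℂ) • Lv m v)) Z := by
  have h1 : HasFDerivAt (fun W : symMatrices m => (-(1/2) : ℂ) * Lv m v W)
      ((-(1/2) : ℂ) • Lv m v) Z := (Lv m v).hasFDerivAt.const_mul _
  have h2 := (Complex.hasDerivAt_exp ((-(1/2) : ℂ) * Lv m v Z)).comp_hasFDerivAt Z h1
  exact h2

lemma continuous_Lv (m : ℕ) : Continuous fun v : Fin m → ℝ => Lv m v := by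
  unfold Lv
  refine continuous_finset_sum _ fun i _ => continuous_finset_sum _ fun j _ => ?_
  exact (Complex.continuous_ofReal.comp
    ((continuous_apply i).mul (continuous_apply j))).smul continuous_const

lemma continuous_Lv_apply (m : ℕ) (Z : symMatrices m) :
    Continuous fun v : Fin m → ℝ => Lv m v Z :=
  (ContinuousLinearMap.apply ℂ ℂ Z).continuous.comp (continuous_Lv m)

lemma self_mul_exp_neg_le_one {x : ℝ} (hx : 0 ≤ x) : x * Real.exp (-x) ≤ 1 := by
  have h1 : x ≤ Real.exp x := by linarith [Real.add_one_le_exp x]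
  calc x * Real.exp (-x) ≤ Real.exp x * Real.exp (-x) :=
        mul_le_mul_of_nonneg_right h1 (Real.exp_nonneg _)
    _ = 1 := by rw [← Real.exp_add]; simp

/-- The map `Z ↦ ∫_{ℝ^m} exp(-½ vᵀZv) dv` is holomorphic on the open set of
complex symmetric `m×m` matrices whose real part is positive definite. -/
theorem complex_gaussian_holomorphic (m : ℕ) :
    DifferentiableOn ℂ
      (fun Z : symMatrices m =>
        ∫ v : Fin m → ℝ,
          Complex.exp (-(1/2) *
            ((fun i => (v i : ℂ)) ⬝ᵥ ((Z : Matrix (Fin m) (Fin m) ℂ) *ᵥ fun i => (v i : ℂ)))))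
      {Z : symMatrices m |
        (Matrix.of fun i j => ((Z : Matrix (Fin m) (Fin m) ℂ) i j).re).PosDef} := by
  have hrw : (fun Z : symMatrices m =>
      ∫ v : Fin m → ℝ, Complex.exp (-(1/2) *
        ((fun i => (v i : ℂ)) ⬝ᵥ ((Z : Matrix (Fin m) (Fin m) ℂ) *ᵥ fun i => (v i : ℂ))))) =
      fun Z : symMatrices m => ∫ v : Fin m → ℝ, Complex.exp (-(1/2) * Lv m v Z) := by
    funext Z
    congr 1
    funext v
    rw [Lv_apply]
  rw [hrw]
  intro Z₀ hZ₀
  simp only [Set.mem_setOf_eq] at hZ₀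
  obtain ⟨δ, hδpos, hlb⟩ := posdef_lower_bound _ hZ₀
  have hlb' : ∀ v : Fin m → ℝ, δ * (∑ i, v i ^ 2) ≤ (Lv m v Z₀).re := by
    intro v; rw [Lv_re]; exact hlb v
  set ε : ℝ := δ / (2 * (m + 1)) with hε
  have hεpos : 0 < ε := by positivity
  -- lower bound for the real part on the ball
  have hball : ∀ v : Fin m → ℝ, ∀ Z ∈ Metric.ball Z₀ ε,
      (δ / 2) * (∑ i, v i ^ 2) ≤ (Lv m v Z).re := by
    intro v Z hZ
    have hS : (0:ℝ) ≤ ∑ i, v i ^ 2 := by positivity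
    have h1 : (Lv m v Z).re = (Lv m v Z₀).re + (Lv m v (Z - Z₀)).re := by
      rw [← Complex.add_re, ← ContinuousLinearMap.map_add]
      congr 2
      abel
    have h2 : |(Lv m v (Z - Z₀)).re| ≤ ((m : ℝ) * ∑ i, v i ^ 2) * ε := by
      refine le_trans (Complex.abs_re_le_norm _) ?_
      refine le_trans ((Lv m v).le_opNorm _) ?_
      have hZd : ‖Z - Z₀‖ ≤ ε := le_of_lt (by simpa [dist_eq_norm] using hZ)
      exact mul_le_mul (Lv_norm_le m v) hZd (norm_nonneg _) (by positivity)
    have h3 : (m : ℝ) * ε ≤ δ / 2 := by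
      rw [hε, ← mul_div_assoc, div_le_div_iff₀ (by positivity) two_pos]
      have : (0:ℝ) ≤ (m:ℝ) := Nat.cast_nonneg m
      nlinarith
    nlinarith [hlb' v, neg_abs_le ((Lv m v (Z - Z₀)).re),
      mul_le_mul_of_nonneg_right h3 hS]
  set bound : (Fin m → ℝ) → ℝ :=
    fun v => (4 * ((m : ℝ) + 1) / δ) * Real.exp (-(δ/8) * ∑ i, v i ^ 2) with hbound
  have hboundnn : ∀ v, 0 ≤ bound v := fun v => by rw [hbound]; positivity
  -- norm bound for derivative on the ball
  have hnormF' : ∀ (v : Fin m → ℝ), ∀ Z ∈ Metric.ball Z₀ ε,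
      ‖Complex.exp (-(1/2) * Lv m v Z) • ((-(1/2) : ℂ) • Lv m v)‖ ≤ bound v := by
    intro v Z hZ
    have hS : (0:ℝ) ≤ ∑ i, v i ^ 2 := by positivity
    have hre := hball v Z hZ
    have hhalf : ‖(-(1/2) : ℂ)‖ = 1/2 := by
      rw [show (-(1/2) : ℂ) = ((-(1/2) : ℝ) : ℂ) by norm_num, Complex.norm_real]
      norm_num
    have h1 : ‖Complex.exp (-(1/2) * Lv m v Z)‖ = Real.exp (-(1/2) * (Lv m v Z).re) := by
      rw [Complex.norm_exp]
      congr 1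
      simp [Complex.mul_re]
    rw [norm_smul, norm_smul, h1, hhalf]
    have h2 : Real.exp (-(1/2) * (Lv m v Z).re) ≤ Real.exp (-(δ/4) * ∑ i, v i ^ 2) := by
      rw [Real.exp_le_exp]
      nlinarith
    have hkey : (∑ i, v i ^ 2) * Real.exp (-(δ/8) * ∑ i, v i ^ 2) ≤ 8/δ := by
      have hx := self_mul_exp_neg_le_one (x := (δ/8) * ∑ i, v i ^ 2) (by positivity)
      calc (∑ i, v i ^ 2) * Real.exp (-(δ/8) * ∑ i, v i ^ 2)
          = (8/δ) * (((δ/8) * ∑ i, v i ^ 2) * Real.exp (-((δ/8) * ∑ i, v i ^ 2))) := by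
            rw [show -(δ/8) * ∑ i, v i ^ 2 = -((δ/8) * ∑ i, v i ^ 2) by ring]
            field_simp
        _ ≤ (8/δ) * 1 := mul_le_mul_of_nonneg_left hx (by positivity)
        _ = 8/δ := mul_one _
    calc Real.exp (-(1/2) * (Lv m v Z).re) * (1/2 * ‖Lv m v‖)
        ≤ Real.exp (-(δ/4) * ∑ i, v i ^ 2) * (1/2 * ((m : ℝ) * ∑ i, v i ^ 2)) := by
          refine mul_le_mul h2 ?_ (by positivity) (Real.exp_nonneg _)
          exact mul_le_mul_of_nonneg_left (Lv_norm_le m v) (by norm_num)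
      _ = (1/2 * (m : ℝ)) * ((∑ i, v i ^ 2) * Real.exp (-(δ/8) * ∑ i, v i ^ 2)) *
            Real.exp (-(δ/8) * ∑ i, v i ^ 2) := by
          rw [show -(δ/4) * ∑ i, v i ^ 2
              = -(δ/8) * (∑ i, v i ^ 2) + -(δ/8) * ∑ i, v i ^ 2 by ring, Real.exp_add]
          ring
      _ ≤ (1/2 * (m : ℝ)) * (8/δ) * Real.exp (-(δ/8) * ∑ i, v i ^ 2) := by
          refine mul_le_mul_of_nonneg_right ?_ (Real.exp_nonneg _)
          exact mul_le_mul_of_nonneg_left hkey (by positivity)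
      _ ≤ bound v := by
          rw [hbound]
          refine mul_le_mul_of_nonneg_right ?_ (Real.exp_nonneg _)
          rw [show (1/2 * (m:ℝ)) * (8/δ) = 4 * (m:ℝ) / δ by field_simp; ring]
          exact (div_le_div_iff_of_pos_right hδpos).mpr (by linarith)
  have hcontF : ∀ Z : symMatrices m,
      Continuous fun v : Fin m → ℝ => Complex.exp (-(1/2) * Lv m v Z) :=
    fun Z => Complex.continuous_exp.comp (continuous_const.mul (continuous_Lv_apply m Z))
  have hF_int : Integrable (fun v : Fin m → ℝ => Complex.exp (-(1/2) * Lv m v Z₀)) := by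
    refine (gaussian_pi_integrable m (c := δ/2) (by positivity)).mono
      ((hcontF Z₀).aestronglyMeasurable) (ae_of_all _ fun v => ?_)
    have h1 : ‖Complex.exp (-(1/2) * Lv m v Z₀)‖ = Real.exp (-(1/2) * (Lv m v Z₀).re) := by
      rw [Complex.norm_exp]
      congr 1
      simp [Complex.mul_re]
    rw [h1, Real.norm_eq_abs, abs_of_pos (Real.exp_pos _), Real.exp_le_exp]
    have h2 := hlb' v
    have hS : (0:ℝ) ≤ ∑ i, v i ^ 2 := by positivity
    nlinarith
  have hF'_meas : AEStronglyMeasurable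
      (fun v : Fin m → ℝ => Complex.exp (-(1/2) * Lv m v Z₀) • ((-(1/2) : ℂ) • Lv m v))
      (volume : Measure (Fin m → ℝ)) := by
    refine Continuous.aestronglyMeasurable ?_
    exact (Complex.continuous_exp.comp (continuous_const.mul (continuous_Lv_apply m Z₀))).smul
      (show Continuous fun v : Fin m → ℝ => (-(1/2) : ℂ) • Lv m v from
        (continuous_const_smul (-(1/2) : ℂ)).comp (continuous_Lv m))
  have hlip : ∀ᵐ v : Fin m → ℝ, LipschitzOnWith (Real.nnabs (bound v))
      (fun Z : symMatrices m => Complex.exp (-(1/2) * Lv m v Z)) (Metric.ball Z₀ ε) := by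
    refine ae_of_all _ fun v => ?_
    refine (convex_ball Z₀ ε).lipschitzOnWith_of_nnnorm_hasFDerivWithin_le
      (f' := fun Z : symMatrices m => Complex.exp (-(1/2) * Lv m v Z) • ((-(1/2) : ℂ) • Lv m v))
      (fun Z _ => (hasFDerivAt_exp_Lv m v Z).hasFDerivWithinAt) (fun Z hZ => ?_)
    rw [← NNReal.coe_le_coe, Real.coe_nnabs, abs_of_nonneg (hboundnn v)]
    exact hnormF' v Z hZ
  have hbint : Integrable bound := by
    rw [hbound]
    exact (gaussian_pi_integrable m (c := δ/8) (by positivity)).const_mul _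
  have main := hasFDerivAt_integral_of_dominated_loc_of_lip
    (μ := (volume : Measure (Fin m → ℝ)))
    (F := fun (Z : symMatrices m) (v : Fin m → ℝ) => Complex.exp (-(1/2) * Lv m v Z))
    (F' := fun v : Fin m → ℝ => Complex.exp (-(1/2) * Lv m v Z₀) • ((-(1/2) : ℂ) • Lv m v))
    (x₀ := Z₀) (bound := bound) (Metric.ball_mem_nhds Z₀ hεpos)
    (Filter.Eventually.of_forall fun Z => (hcontF Z).aestronglyMeasurable)
    hF_int hF'_meas hlip hbint
    (ae_of_all _ fun v => hasFDerivAt_exp_Lv m v Z₀)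
  exact main.2.differentiableAt.differentiableWithinAt
end

section
/- Let A be a real symmetric invertible m×m matrix with p positive eigenvalues and q negative eigenvalues (p + q = m, counted with multiplicity). For every ε > 0 the function v ↦ exp(−½ vᵀ(εI + iA)v) is integrable on ℝ^m, and lim_{ε→0⁺} ∫_{ℝ^m} exp(−½ vᵀ(εI + iA)v) dv = (2π)^{m/2} · e^{−iπ(p−q)/4} · |det A|^{−1/2}. -/
open Matrix MeasureTheory Filter

section FresnelAux

open Complex Real

private lemma fresnel_cpow_half_mul_I (t : ℝ) (ht : 0 < t) (s : ℝ) (hs : s = 1 ∨ s = -1) :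
    ((t : ℂ) * (-(s:ℂ) * I)) ^ (1/2 : ℂ)
      = (Real.sqrt t : ℂ) * Complex.exp (-(I * (Real.pi : ℂ) * (s:ℂ)) / 4) := by
  have hz : ((t : ℂ) * (-(s:ℂ) * I)) ≠ 0 := by
    rcases hs with rfl | rfl <;> simp [Complex.ext_iff, ht.ne', Complex.I_ne_zero]
  rw [Complex.cpow_def_of_ne_zero hz]
  have hlog : Complex.log ((t : ℂ) * (-(s:ℂ) * I)) = (Real.log t : ℂ) + (-(s * (π/2)) : ℝ) * I := by
    rw [Complex.log_ofReal_mul ht (by rcases hs with rfl | rfl <;> simp [Complex.I_ne_zero])]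
    rcases hs with rfl | rfl
    · simp [Complex.log_neg_I]
    · simp [Complex.log_I]
  rw [hlog]
  have : ((Real.log t : ℂ) + (-(s * (π/2)) : ℝ) * I) * (1/2)
      = (Real.log t / 2 : ℝ) + (-(I * (Real.pi:ℂ) * s) / 4) := by push_cast; ring
  rw [this, Complex.exp_add]
  congr 1
  rw [← Complex.ofReal_exp]
  norm_cast
  rw [Real.sqrt_eq_rpow, Real.rpow_def_of_pos ht]
  ring_nf

private lemma fresnel_factor_eq (r : ℝ) (hr : r ≠ 0) :
    ((Real.pi : ℂ) / (((r:ℂ) * I)/2)) ^ (1/2:ℂ)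
      = (Real.sqrt (2*Real.pi/|r|) : ℂ) *
        Complex.exp (-(I * (Real.pi:ℂ) * ((if 0 < r then (1:ℝ) else (-1:ℝ)) : ℝ)) / 4) := by
  set s : ℝ := if 0 < r then (1:ℝ) else -1 with hs_def
  have hs : s = 1 ∨ s = -1 := by by_cases h : 0 < r <;> simp [hs_def, h]
  have ht : 0 < 2*Real.pi/|r| := by positivity
  have hbase : (Real.pi : ℂ) / (((r:ℂ) * I)/2) = ((2*Real.pi/|r| : ℝ) : ℂ) * (-(s:ℂ) * I) := by
    have hrne : (r:ℂ) ≠ 0 := Complex.ofReal_ne_zero.2 hr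
    rw [div_eq_iff (by simp [hrne, Complex.I_ne_zero])]
    rcases lt_trichotomy r 0 with h | h | h
    · rw [abs_of_neg h]
      simp only [hs_def, if_neg (not_lt.2 h.le)]
      push_cast
      field_simp
      ring_nf
      rw [Complex.I_sq]
      ring
    · exact absurd h hr
    · rw [abs_of_pos h]
      simp only [hs_def, if_pos h]
      push_cast
      field_simp
      ring_nf
      rw [Complex.I_sq]
      ring
  rw [hbase, fresnel_cpow_half_mul_I _ ht s hs]

private lemma fresnel_sqrt_prod {ι : Type*} (s : Finset ι) (f : ι → ℝ) (h : ∀ i, 0 ≤ f i) :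
    Real.sqrt (∏ i ∈ s, f i) = ∏ i ∈ s, Real.sqrt (f i) := by
  induction s using Finset.cons_induction with
  | empty => simp
  | cons a s ha ih => rw [Finset.prod_cons, Finset.prod_cons, Real.sqrt_mul (h a), ih]

private lemma fresnel_real_prod_eq (m : ℕ) (lam : Fin m → ℝ) (hlam : ∀ i, lam i ≠ 0) :
    ∏ i, Real.sqrt (2*Real.pi/|lam i|)
      = (2*Real.pi)^((m:ℝ)/2) * (∏ i, |lam i|)^(-(1/2):ℝ) := by
  have hP : 0 < ∏ i, |lam i| := Finset.prod_pos fun i _ => abs_pos.2 (hlam i)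
  have h1 : (2*Real.pi)^((m:ℝ)/2) = Real.sqrt ((2*Real.pi)^m) := by
    rw [Real.sqrt_eq_rpow, ← Real.rpow_natCast (2*Real.pi) m,
      ← Real.rpow_mul (by positivity)]
    norm_num
    ring_nf
  have h2 : (∏ i, |lam i|)^(-(1/2):ℝ) = (Real.sqrt (∏ i, |lam i|))⁻¹ := by
    rw [Real.rpow_neg hP.le, Real.sqrt_eq_rpow]
  rw [h1, h2, ← fresnel_sqrt_prod Finset.univ (fun i => 2*Real.pi/|lam i|) (fun i => by positivity)]
  rw [← Real.sqrt_inv, ← Real.sqrt_mul (by positivity)]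
  congr 1
  rw [Finset.prod_div_distrib, Finset.prod_const, Finset.card_univ, Fintype.card_fin]
  field_simp

private lemma fresnel_sum_sign_eq (m : ℕ) (lam : Fin m → ℝ) (p q : ℕ)
    (hp : p = (Finset.univ.filter fun i => 0 < lam i).card) (hpq : p + q = m) :
    (∑ i, (if 0 < lam i then (1:ℝ) else -1)) = (p:ℝ) - (q:ℝ) := by
  classical
  rw [Finset.sum_ite, Finset.sum_const, Finset.sum_const]
  have hcard : (Finset.univ.filter fun i => 0 < lam i).card
      + (Finset.univ.filter fun i => ¬ 0 < lam i).card = m := by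
    rw [Finset.card_filter_add_card_filter_not, Finset.card_univ, Fintype.card_fin]
  have h1 : (Finset.univ.filter fun i => ¬ 0 < lam i).card = q := by omega
  rw [← hp, h1]
  have : (p:ℝ) + (q:ℝ) = m := by exact_mod_cast congrArg Nat.cast hpq
  simp only [nsmul_eq_mul, mul_one, mul_neg]
  ring

private lemma fresnel_const_eq (m : ℕ) (lam : Fin m → ℝ) (hlam : ∀ i, lam i ≠ 0) (p q : ℕ)
    (hp : p = (Finset.univ.filter fun i => 0 < lam i).card) (hpq : p + q = m) :
    ∏ i, ((Real.pi:ℂ) / (((lam i : ℂ) * I)/2)) ^ (1/2:ℂ)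
      = (((2 * Real.pi) ^ ((m : ℝ) / 2) : ℝ) : ℂ) *
        Complex.exp (-(I * (Real.pi : ℂ) * (((p : ℝ) - (q : ℝ) : ℝ) : ℂ) / 4)) *
        (((∏ i, |lam i|) ^ (-(1/2) : ℝ) : ℝ) : ℂ) := by
  have h1 : ∀ i : Fin m, ((Real.pi:ℂ) / (((lam i : ℂ) * I)/2)) ^ (1/2:ℂ)
      = (Real.sqrt (2*Real.pi/|lam i|) : ℂ) *
        Complex.exp (-(I * (Real.pi:ℂ) * ((if 0 < lam i then (1:ℝ) else (-1:ℝ)) : ℝ)) / 4) :=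
    fun i => fresnel_factor_eq (lam i) (hlam i)
  calc ∏ i, ((Real.pi:ℂ) / (((lam i : ℂ) * I)/2)) ^ (1/2:ℂ)
      = (∏ i, (Real.sqrt (2*Real.pi/|lam i|) : ℂ)) *
        ∏ i, Complex.exp (-(I * (Real.pi:ℂ) * ((if 0 < lam i then (1:ℝ) else (-1:ℝ)) : ℝ)) / 4) := by
        rw [← Finset.prod_mul_distrib]; exact Finset.prod_congr rfl fun i _ => h1 i
    _ = (((2 * Real.pi) ^ ((m : ℝ) / 2) : ℝ) : ℂ) *
        Complex.exp (-(I * (Real.pi : ℂ) * (((p : ℝ) - (q : ℝ) : ℝ) : ℂ) / 4)) *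
        (((∏ i, |lam i|) ^ (-(1/2) : ℝ) : ℝ) : ℂ) := by
        rw [← Complex.exp_sum]
        have hsum : (∑ i, -(I * (Real.pi:ℂ) * ((if 0 < lam i then (1:ℝ) else (-1:ℝ)) : ℝ):ℂ) / 4)
            = -(I * (Real.pi : ℂ) * (((p : ℝ) - (q : ℝ) : ℝ) : ℂ) / 4) := by
          rw [← Finset.sum_div, Finset.sum_neg_distrib, ← Finset.mul_sum,
            ← Complex.ofReal_sum, fresnel_sum_sign_eq m lam p q hp hpq, neg_div]
        rw [hsum, ← Complex.ofReal_prod, fresnel_real_prod_eq m lam hlam]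
        push_cast
        ring

private lemma fresnel_quad_expand (m : ℕ) (A : Matrix (Fin m) (Fin m) ℝ) (ε : ℝ)
    (v : Fin m → ℝ) :
    ((fun i => (v i : ℂ)) ⬝ᵥ
      (((ε : ℂ) • (1 : Matrix (Fin m) (Fin m) ℂ) + Complex.I • A.map (fun x => (x : ℂ)))
        *ᵥ fun i => (v i : ℂ)))
    = (ε:ℂ) * ((v ⬝ᵥ v : ℝ) : ℂ) + Complex.I * ((v ⬝ᵥ (A *ᵥ v) : ℝ) : ℂ) := by
  simp only [Matrix.add_mulVec, Matrix.smul_mulVec, Matrix.one_mulVec,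
    dotProduct_add, dotProduct_smul, smul_eq_mul]
  congr 1
  · congr 1
    simp only [dotProduct]
    push_cast
    rfl
  · congr 1
    simp only [dotProduct, Matrix.mulVec, Matrix.map_apply]
    push_cast
    rfl

variable {m : ℕ} {A : Matrix (Fin m) (Fin m) ℝ}

private lemma fresnel_coord_sq (hA : A.IsHermitian) (c : EuclideanSpace ℝ (Fin m)) :
    (WithLp.equiv 2 (Fin m → ℝ) (hA.eigenvectorBasis.repr.symm c)) ⬝ᵥ
      (WithLp.equiv 2 (Fin m → ℝ) (hA.eigenvectorBasis.repr.symm c)) = ∑ i, (c i)^2 := by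
  set b := hA.eigenvectorBasis
  set x := b.repr.symm c with hx
  have h1 : (WithLp.equiv 2 (Fin m → ℝ) x) ⬝ᵥ (WithLp.equiv 2 (Fin m → ℝ) x)
      = (inner ℝ x x : ℝ) := by
    simp only [dotProduct, PiLp.inner_apply, RCLike.inner_apply, starRingEnd_apply,
      star_trivial, WithLp.equiv_apply]
  rw [h1, ← b.repr.inner_map_map x x, hx, b.repr.apply_symm_apply]
  rw [PiLp.inner_apply]
  simp [RCLike.inner_apply, sq]

private lemma fresnel_coord_quad (hA : A.IsHermitian) (c : EuclideanSpace ℝ (Fin m)) :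
    (WithLp.equiv 2 (Fin m → ℝ) (hA.eigenvectorBasis.repr.symm c)) ⬝ᵥ
      (A *ᵥ (WithLp.equiv 2 (Fin m → ℝ) (hA.eigenvectorBasis.repr.symm c)))
      = ∑ i, hA.eigenvalues i * (c i)^2 := by
  classical
  set b := hA.eigenvectorBasis with hb
  set x := b.repr.symm c with hx
  set L := Matrix.toEuclideanLin A with hL
  have hsym : (Matrix.toEuclideanLin A).IsSymmetric := Matrix.isHermitian_iff_isSymmetric.mp hA
  have hLb : ∀ i, L (b i) = hA.eigenvalues i • (b i) := by
    intro i
    have h := hA.mulVec_eigenvectorBasis i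
    apply (WithLp.equiv 2 (Fin m → ℝ)).injective
    simp only [hL, WithLp.equiv_apply, Matrix.ofLp_toEuclideanLin_apply]
    exact h
  have step0 : (WithLp.equiv 2 (Fin m → ℝ) x) ⬝ᵥ (A *ᵥ (WithLp.equiv 2 (Fin m → ℝ) x))
      = (inner ℝ x (L x) : ℝ) := by
    simp only [dotProduct, PiLp.inner_apply, RCLike.inner_apply, starRingEnd_apply,
      star_trivial, WithLp.equiv_apply, hL, Matrix.toEuclideanLin_apply,
      WithLp.equiv_symm_apply]
    exact Finset.sum_congr rfl fun i _ => mul_comm _ _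
  have step2 : ∀ i, b.repr (L x) i = hA.eigenvalues i * c i := by
    intro i
    rw [b.repr_apply_apply, ← hsym (b i) x, hLb i, real_inner_smul_left,
      ← b.repr_apply_apply, hx, b.repr.apply_symm_apply]
  rw [step0, ← b.repr.inner_map_map x (L x)]
  have hc : b.repr x = c := b.repr.apply_symm_apply c
  simp only [PiLp.inner_apply, RCLike.inner_apply, starRingEnd_apply, star_trivial, step2, hc]
  exact Finset.sum_congr rfl fun i _ => by ring

private lemma fresnel_key_integral (hA : A.IsHermitian) {ε : ℝ} (hε : 0 < ε) :
    Integrable (fun v : Fin m → ℝ =>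
        Complex.exp (-(1/2) *
          ((fun i => (v i : ℂ)) ⬝ᵥ
            (((ε : ℂ) • (1 : Matrix (Fin m) (Fin m) ℂ)
              + Complex.I • A.map (fun x => (x : ℂ))) *ᵥ fun i => (v i : ℂ))))) ∧
    (∫ v : Fin m → ℝ,
        Complex.exp (-(1/2) *
          ((fun i => (v i : ℂ)) ⬝ᵥ
            (((ε : ℂ) • (1 : Matrix (Fin m) (Fin m) ℂ)
              + Complex.I • A.map (fun x => (x : ℂ))) *ᵥ fun i => (v i : ℂ)))))
      = ∏ i, ((Real.pi : ℂ) / (((ε:ℂ) + (hA.eigenvalues i : ℂ) * Complex.I)/2)) ^ (1/2:ℂ) := by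
  classical
  set b := hA.eigenvectorBasis with hb
  set lam := hA.eigenvalues with hlam
  set F : (Fin m → ℝ) → ℂ := fun v =>
    Complex.exp (-(1/2) *
      ((fun i => (v i : ℂ)) ⬝ᵥ
        (((ε : ℂ) • (1 : Matrix (Fin m) (Fin m) ℂ)
          + Complex.I • A.map (fun x => (x : ℂ))) *ᵥ fun i => (v i : ℂ)))) with hF
  set bc : Fin m → ℂ := fun i => ((ε:ℂ) + (lam i : ℂ) * Complex.I)/2 with hbc
  have hre : ∀ i, 0 < (bc i).re := by
    intro i
    have : bc i = ((ε/2 : ℝ) : ℂ) + ((lam i/2 : ℝ) : ℂ) * Complex.I := by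
      rw [hbc]; push_cast; ring
    rw [this]
    simp [Complex.add_re, Complex.mul_re]
    positivity
  set g : Fin m → ℝ → ℂ := fun i x => Complex.exp (-(bc i) * (x:ℂ)^2) with hg
  have hgi : ∀ i, Integrable (g i) := fun i => integrable_cexp_neg_mul_sq (hre i)
  have hgint : ∀ i, ∫ x : ℝ, g i x = ((Real.pi : ℂ) / bc i) ^ (1/2:ℂ) :=
    fun i => integral_gaussian_complex (hre i)
  have hpoint : ∀ c : EuclideanSpace ℝ (Fin m),
      F (WithLp.equiv 2 (Fin m → ℝ) (b.repr.symm c)) = ∏ i, g i (c i) := by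
    intro c
    rw [hF]
    simp only
    rw [fresnel_quad_expand m A ε (WithLp.equiv 2 (Fin m → ℝ) (b.repr.symm c)),
      fresnel_coord_sq hA c, fresnel_coord_quad hA c, ← Complex.exp_sum]
    congr 1
    push_cast
    rw [Finset.mul_sum, Finset.mul_sum, ← Finset.sum_add_distrib, Finset.mul_sum]
    exact Finset.sum_congr rfl fun i _ => by simp only [hbc, hlam]; push_cast; ring
  set eq1 := (MeasurableEquiv.toLp 2 (Fin m → ℝ)).symm with heq1
  set Φ : (Fin m → ℝ) ≃ᵐ (Fin m → ℝ) :=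
    (eq1.symm.trans (b.measurableEquiv.symm)).trans eq1 with hΦ
  have hΦmp : MeasurePreserving Φ := by
    exact ((EuclideanSpace.volume_preserving_symm_measurableEquiv_toLp (Fin m)).comp
      ((b.measurePreserving_measurableEquiv.symm).comp
        (EuclideanSpace.volume_preserving_symm_measurableEquiv_toLp (Fin m)).symm))
  have hΦapp : ∀ v : Fin m → ℝ,
      Φ v = WithLp.equiv 2 (Fin m → ℝ) (b.repr.symm ((WithLp.equiv 2 (Fin m → ℝ)).symm v)) :=
    fun v => rfl
  have hFΦ : ∀ v : Fin m → ℝ, F (Φ v) = ∏ i, g i (v i) := by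
    intro v
    rw [hΦapp, hpoint ((WithLp.equiv 2 (Fin m → ℝ)).symm v)]
    exact Finset.prod_congr rfl fun i _ => by rfl
  have hK : Integrable (fun v : Fin m → ℝ => ∏ i, g i (v i)) := Integrable.fintype_prod hgi
  have hKF : F ∘ Φ = fun v : Fin m → ℝ => ∏ i, g i (v i) := funext hFΦ
  have hIntF : Integrable F := by
    refine (hΦmp.integrable_comp_emb Φ.measurableEmbedding).mp ?_
    rw [hKF]; exact hK
  refine ⟨hIntF, ?_⟩
  have h1 : ∫ v : Fin m → ℝ, F v = ∫ v : Fin m → ℝ, F (Φ v) := (hΦmp.integral_comp' F).symm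
  rw [h1]
  have h2 : ∫ v : Fin m → ℝ, F (Φ v) = ∫ v : Fin m → ℝ, ∏ i, g i (v i) := by
    exact integral_congr_ae (Filter.Eventually.of_forall hFΦ)
  rw [h2, MeasureTheory.integral_fintype_prod_volume_eq_prod (f := g)]
  exact Finset.prod_congr rfl fun i _ => hgint i

end FresnelAux

/-- **Fresnel-type Gaussian integral.** Let `A` be a real symmetric invertible
`m×m` matrix with `p` positive and `q` negative eigenvalues (`p + q = m`). Then for every
`ε > 0` the function `v ↦ exp(-½ vᵀ(εI + iA)v)` is integrable on `ℝ^m`, and as `ε → 0⁺`,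
`∫ exp(-½ vᵀ(εI + iA)v) dv → (2π)^{m/2} e^{-iπ(p-q)/4} |det A|^{-1/2}`. -/
theorem fresnel_gaussian_limit (m : ℕ) (A : Matrix (Fin m) (Fin m) ℝ)
    (hA : A.IsHermitian) (hdet : A.det ≠ 0) (p q : ℕ)
    (hp : p = (Finset.univ.filter fun i => 0 < hA.eigenvalues i).card)
    (hq : q = (Finset.univ.filter fun i => hA.eigenvalues i < 0).card)
    (hpq : p + q = m) :
    (∀ ε : ℝ, 0 < ε →
      Integrable (fun v : Fin m → ℝ =>
        Complex.exp (-(1/2) *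
          ((fun i => (v i : ℂ)) ⬝ᵥ
            (((ε : ℂ) • (1 : Matrix (Fin m) (Fin m) ℂ)
              + Complex.I • A.map (fun x => (x : ℂ))) *ᵥ fun i => (v i : ℂ)))))) ∧
    Tendsto (fun ε : ℝ =>
        ∫ v : Fin m → ℝ,
          Complex.exp (-(1/2) *
            ((fun i => (v i : ℂ)) ⬝ᵥ
              (((ε : ℂ) • (1 : Matrix (Fin m) (Fin m) ℂ)
                + Complex.I • A.map (fun x => (x : ℂ))) *ᵥ fun i => (v i : ℂ)))))
      (nhdsWithin 0 (Set.Ioi 0))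
      (nhds ((((2 * Real.pi) ^ ((m : ℝ) / 2) : ℝ) : ℂ) *
        Complex.exp (-(Complex.I * (Real.pi : ℂ) * (((p : ℝ) - (q : ℝ) : ℝ) : ℂ) / 4)) *
        ((|A.det| ^ (-(1/2) : ℝ) : ℝ) : ℂ))) := by
  classical
  have hlamne : ∀ i, hA.eigenvalues i ≠ 0 := by
    intro i hi
    apply hdet
    rw [hA.det_eq_prod_eigenvalues]
    exact Finset.prod_eq_zero (Finset.mem_univ i) (by simp [hi])
  refine ⟨fun ε hε => (fresnel_key_integral hA hε).1, ?_⟩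
  -- the limit of the product formula
  have habs : (∏ i, |hA.eigenvalues i|) = |A.det| := by
    rw [hA.det_eq_prod_eigenvalues, Finset.abs_prod]
    norm_num
  have hval : ∏ i, ((Real.pi:ℂ) / (((hA.eigenvalues i : ℂ) * Complex.I)/2)) ^ (1/2:ℂ)
      = (((2 * Real.pi) ^ ((m : ℝ) / 2) : ℝ) : ℂ) *
        Complex.exp (-(Complex.I * (Real.pi : ℂ) * (((p : ℝ) - (q : ℝ) : ℝ) : ℂ) / 4)) *
        ((|A.det| ^ (-(1/2) : ℝ) : ℝ) : ℂ) := by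
    rw [fresnel_const_eq m hA.eigenvalues hlamne p q hp hpq, habs]
  have htend : Tendsto (fun ε : ℝ =>
      ∏ i, ((Real.pi : ℂ) / (((ε:ℂ) + (hA.eigenvalues i : ℂ) * Complex.I)/2)) ^ (1/2:ℂ))
      (nhdsWithin 0 (Set.Ioi 0))
      (nhds (∏ i, ((Real.pi:ℂ) / (((hA.eigenvalues i : ℂ) * Complex.I)/2)) ^ (1/2:ℂ))) := by
    apply tendsto_finset_prod
    intro i _
    set lam := hA.eigenvalues i with hlamdef
    have hlne : (lam : ℂ) ≠ 0 := Complex.ofReal_ne_zero.2 (hlamne i)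
    have hne : (((lam:ℂ) * Complex.I)/2 : ℂ) ≠ 0 := by
      simp [hlne, Complex.I_ne_zero]
    have hden : Tendsto (fun ε : ℝ => (((ε:ℂ) + (lam:ℂ) * Complex.I)/2))
        (nhds 0) (nhds (((lam:ℂ) * Complex.I)/2)) := by
      have h0 : Tendsto (fun ε : ℝ => ((ε:ℂ))) (nhds 0) (nhds 0) := by
        simpa using Complex.continuous_ofReal.tendsto 0
      have := (h0.add (tendsto_const_nhds (x := (lam:ℂ) * Complex.I))).div_const 2
      simpa using this
    have hbase : Tendsto (fun ε : ℝ => ((Real.pi : ℂ) / (((ε:ℂ) + (lam:ℂ) * Complex.I)/2)))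
        (nhds 0) (nhds ((Real.pi:ℂ) / (((lam:ℂ) * Complex.I)/2))) :=
      tendsto_const_nhds.div hden hne
    have hslit : ((Real.pi:ℂ) / (((lam:ℂ) * Complex.I)/2)) ∈ Complex.slitPlane := by
      have hval2 : ((Real.pi:ℂ) / (((lam:ℂ) * Complex.I)/2))
          = ((-(2*Real.pi/lam) : ℝ) : ℂ) * Complex.I := by
        rw [div_eq_iff hne]
        push_cast
        field_simp
        ring_nf
        rw [Complex.I_sq]
        ring
      rw [hval2, Complex.mem_slitPlane_iff]
      right
      simp only [Complex.mul_im, Complex.ofReal_re, Complex.I_im, Complex.ofReal_im,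
        Complex.I_re, mul_zero, mul_one, add_zero, zero_add]
      have : (2*Real.pi/lam) ≠ 0 := by
        apply div_ne_zero (by positivity) (hlamne i)
      simpa using this
    have hcont : ContinuousAt (fun z : ℂ => z ^ (1/2:ℂ))
        ((Real.pi:ℂ) / (((lam:ℂ) * Complex.I)/2)) :=
      continuousAt_cpow_const hslit
    exact hcont.tendsto.comp (hbase.mono_left nhdsWithin_le_nhds)
  rw [hval] at htend
  apply htend.congr'
  filter_upwards [self_mem_nhdsWithin] with ε hε
  exact ((fresnel_key_integral hA hε).2).symm
end

section
/- Let n ≥ 1 and let X ∈ sp(2n,ℝ) be such that the symmetric matrix JX is invertible with p positive and q negative eigenvalues (p + q = 2n). Then lim_{ε→0⁺} iⁿ (2π)^{−n} ∫_{ℝ^{2n}} exp(−½ vᵀ(εI + i·JX)v) dv = i^q · |det X|^{−1/2}. (This is the purely even case of the paper's Proposition evaluating the superPfaffian on the open set V_{p,q}: Spf(X) = i^q·Pfaff(D − CA⁻¹B)/√|det A|.) -/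
open Matrix MeasureTheory Filter

section Aux
open Complex

theorem quad_change' {ι : Type*} [Fintype ι] (M B : Matrix ι ι ℂ) (w : ι → ℂ) :
    (M *ᵥ w) ⬝ᵥ (B *ᵥ (M *ᵥ w)) = w ⬝ᵥ ((Mᵀ * B * M) *ᵥ w) := by
  rw [dotProduct_mulVec, ← vecMul_transpose M w, vecMul_vecMul, vecMul_transpose,
    ← dotProduct_mulVec, mulVec_mulVec]

theorem quad_diag' {ι : Type*} [Fintype ι] [DecidableEq ι] (d : ι → ℂ) (w : ι → ℂ) :
    w ⬝ᵥ (diagonal d *ᵥ w) = ∑ i, d i * w i ^ 2 := by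
  simp [dotProduct, mulVec_diagonal]
  exact Finset.sum_congr rfl fun i _ => by ring

theorem coe_mulVec' {ι : Type*} [Fintype ι] (U : Matrix ι ι ℝ) (w : ι → ℝ) :
    (fun i => ((U *ᵥ w) i : ℂ)) = (U.map (fun x => (x:ℂ))) *ᵥ (fun i => (w i : ℂ)) := by
  funext i
  simp [mulVec, dotProduct]

theorem base_eq' {l : ℝ} (hl : l ≠ 0) :
    (Real.pi : ℂ) / ((Complex.I * l) / 2) = ((2*Real.pi/l : ℝ) : ℂ) * (-I) := by
  have hc : (l:ℂ) ≠ 0 := by exact_mod_cast hl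
  push_cast
  rw [div_eq_iff (by simp [hc, Complex.I_ne_zero] : (Complex.I * (l:ℂ) / 2) ≠ 0)]
  field_simp
  ring_nf
  simp [Complex.I_sq]

theorem sqrt_val' {l : ℝ} (hl : l ≠ 0) :
    ((Real.pi : ℂ) / ((Complex.I * l) / 2)) ^ (1/2 : ℂ)
      = ((Real.sqrt (2*Real.pi/|l|) : ℝ) : ℂ) *
        Complex.exp (((if 0 < l then -(Real.pi/4) else Real.pi/4 : ℝ) : ℂ) * Complex.I) := by
  have hr : (0:ℝ) < 2*Real.pi/|l| := by positivity
  set r : ℝ := 2*Real.pi/|l| with hrdef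
  have hz : (Real.pi : ℂ) / ((Complex.I * l) / 2) = (r : ℂ) * (if 0 < l then -I else I) := by
    rw [base_eq' hl]
    rcases lt_or_gt_of_ne hl with h | h
    · rw [if_neg (not_lt.2 h.le), hrdef, abs_of_neg h]
      have : 2*Real.pi/l = -(2*Real.pi / -l) := by field_simp
      rw [this]
      push_cast
      ring
    · rw [if_pos h, hrdef, abs_of_pos h]
  rw [hz]
  have habs : ‖(r : ℂ) * (if 0 < l then -I else I)‖ = r := by
    split <;> simp [abs_of_pos hr]
  have harg : Complex.arg ((r : ℂ) * (if 0 < l then -I else I))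
      = (if 0 < l then -(Real.pi/2) else Real.pi/2) := by
    split
    · rw [Complex.arg_real_mul _ hr, Complex.arg_neg_I]
    · rw [Complex.arg_real_mul _ hr, Complex.arg_I]
  have hzne : (r : ℂ) * (if 0 < l then -I else I) ≠ 0 := by
    split <;> simp [hr.ne', Complex.I_ne_zero]
  rw [Complex.cpow_def_of_ne_zero hzne, Complex.log, habs, harg]
  rw [add_mul, Complex.exp_add]
  have h1 : Complex.exp ((Real.log r : ℂ) * (1/2)) = ((Real.sqrt r : ℝ) : ℂ) := by
    rw [Real.sqrt_eq_rpow, Real.rpow_def_of_pos hr]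
    push_cast
    rfl
  have h2 : ((if 0 < l then -(Real.pi/2) else Real.pi/2 : ℝ) : ℂ) * I * (1/2)
      = ((if 0 < l then -(Real.pi/4) else Real.pi/4 : ℝ) : ℂ) * I := by
    split <;> push_cast <;> ring
  rw [h1, h2]

theorem gauss_int' {ι : Type*} [Fintype ι] [DecidableEq ι] (A : Matrix ι ι ℝ)
    (hA : A.IsHermitian) {ε : ℝ} (hε : 0 < ε) :
    ∫ v : ι → ℝ, Complex.exp (-(1/2) * ((fun i => (v i : ℂ)) ⬝ᵥ
        (((ε:ℂ) • (1 : Matrix ι ι ℂ) + Complex.I • A.map (fun x => (x:ℂ)))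
          *ᵥ fun i => (v i : ℂ))))
      = ∏ i, ((Real.pi:ℂ) / (((ε:ℂ) + Complex.I * hA.eigenvalues i)/2)) ^ (1/2 : ℂ) := by
  classical
  set lam := hA.eigenvalues with hlam
  set Ur : Matrix ι ι ℝ := (hA.eigenvectorUnitary : Matrix ι ι ℝ) with hUr
  set B : Matrix ι ι ℂ := ((ε:ℂ) • (1 : Matrix ι ι ℂ) + Complex.I • A.map (fun x => (x:ℂ)))
    with hB
  have hUsU : star Ur * Ur = 1 := by
    simpa [hUr] using unitary.coe_star_mul_self hA.eigenvectorUnitary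
  have hstarT : star Ur = Urᵀ := Matrix.conjTranspose_eq_transpose_of_trivial Ur
  have hdiagR : Urᵀ * A * Ur = diagonal lam := by
    rw [← hstarT]
    have h := hA.conjStarAlgAut_star_eigenvectorUnitary
    rw [Unitary.conjStarAlgAut_star_apply] at h
    simpa [RCLike.ofReal_real_eq_id] using h
  set c : ℝ →+* ℂ := Complex.ofRealHom with hc
  set Uc : Matrix ι ι ℂ := Ur.map (fun x => (x:ℂ)) with hUc
  have hmapc : ∀ M : Matrix ι ι ℝ, M.map (fun x => (x:ℂ)) = M.map c := fun M => rfl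
  have hUcT : Ucᵀ * Uc = 1 := by
    rw [hUc, hmapc, ← Matrix.transpose_map, ← Matrix.map_mul, ← hstarT, hUsU]
    exact Matrix.map_one c (map_zero c) (map_one c)
  have hdiagC : Ucᵀ * A.map (fun x => (x:ℂ)) * Uc = diagonal (fun i => (lam i : ℂ)) := by
    rw [hUc, hmapc, hmapc, ← Matrix.transpose_map, ← Matrix.map_mul, ← Matrix.map_mul, hdiagR]
    rw [Matrix.diagonal_map (map_zero c)]
    rfl
  have hkey : Ucᵀ * B * Uc = diagonal (fun i => (ε:ℂ) + Complex.I * lam i) := by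
    rw [hB, Matrix.mul_add, Matrix.add_mul, Matrix.mul_smul, Matrix.smul_mul,
      Matrix.mul_smul, Matrix.smul_mul, Matrix.mul_one, hUcT, hdiagC]
    rw [← Matrix.diagonal_smul, ← Matrix.diagonal_one, ← Matrix.diagonal_smul,
      Matrix.diagonal_add]
    congr 1
    funext i
    simp [smul_eq_mul]
  have hdetU2 : Ur.det * Ur.det = 1 := by
    have h := congrArg Matrix.det hUsU
    rwa [det_mul, hstarT, det_transpose, det_one] at h
  have hdetU : |Ur.det| = 1 := by
    have h1 : |Ur.det| * |Ur.det| = 1 := by rw [← abs_mul, hdetU2, abs_one]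
    nlinarith [abs_nonneg Ur.det]
  have hdetne : Ur.det ≠ 0 := by
    intro h
    rw [h, mul_zero] at hdetU2
    exact zero_ne_one hdetU2
  have hmp : MeasurePreserving (toLin' Ur) (volume : Measure (ι → ℝ)) volume := by
    refine ⟨(LinearMap.continuous_on_pi _).measurable, ?_⟩
    rw [Real.map_matrix_volume_pi_eq_smul_volume_pi hdetne]
    simp [abs_inv, hdetU]
  have hcont : Continuous fun v : ι → ℝ => Complex.exp (-(1/2) *
      ((fun i => (v i : ℂ)) ⬝ᵥ (B *ᵥ fun i => (v i : ℂ)))) := by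
    apply Continuous.cexp
    apply Continuous.mul continuous_const
    simp only [Matrix.mulVec, dotProduct]
    fun_prop
  rw [← hmp.map_eq, integral_map hmp.measurable.aemeasurable hcont.aestronglyMeasurable]
  have hpt : ∀ w : ι → ℝ, Complex.exp (-(1/2) * ((fun i => ((toLin' Ur w) i : ℂ)) ⬝ᵥ
      (B *ᵥ fun i => ((toLin' Ur w) i : ℂ))))
      = ∏ i, Complex.exp (-((((ε:ℂ) + Complex.I * lam i))/2) * ((w i : ℂ))^2) := by
    intro w
    have h1 : (fun i => ((toLin' Ur w) i : ℂ)) = Uc *ᵥ (fun i => (w i : ℂ)) := by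
      rw [show toLin' Ur w = Ur *ᵥ w from Matrix.toLin'_apply Ur w]
      exact coe_mulVec' Ur w
    rw [h1, quad_change', hkey, quad_diag']
    rw [Finset.mul_sum, ← Complex.exp_sum]
    congr 1
    exact Finset.sum_congr rfl fun i _ => by ring
  simp_rw [hpt]
  rw [MeasureTheory.volume_pi, MeasureTheory.integral_fintype_prod_eq_prod (μ := fun _ => volume)
    (f := fun i (t : ℝ) => Complex.exp (-((((ε:ℂ) + Complex.I * lam i))/2) * ((t : ℂ))^2))]
  refine Finset.prod_congr rfl fun i _ => ?_
  exact integral_gaussian_complex (by simp [hε] : 0 < ((((ε:ℂ) + Complex.I * lam i))/2).re)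

end Aux


/-- For `X ∈ sp(2n,ℝ)` with `JX` invertible with `p` positive and `q` negative
eigenvalues (`p + q = 2n`), the regularized Liouville Gaussian integral satisfies
`lim_{ε→0⁺} iⁿ (2π)^{-n} ∫ exp(-½ vᵀ(εI + i·JX)v) dv = i^q |det X|^{-1/2}`.
This is the purely even case of the evaluation of the superPfaffian on `V_{p,q}`. -/
theorem superPfaffian_on_Vpq (n : ℕ) (hn : 1 ≤ n)
    (X : Matrix (Fin n ⊕ Fin n) (Fin n ⊕ Fin n) ℝ)
    (hX : Xᵀ * Matrix.J (Fin n) ℝ + Matrix.J (Fin n) ℝ * X = 0)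
    (hJX : (Matrix.J (Fin n) ℝ * X).IsHermitian)
    (hdet : (Matrix.J (Fin n) ℝ * X).det ≠ 0) (p q : ℕ)
    (hp : p = (Finset.univ.filter fun i => 0 < hJX.eigenvalues i).card)
    (hq : q = (Finset.univ.filter fun i => hJX.eigenvalues i < 0).card)
    (hpq : p + q = 2 * n) :
    Tendsto (fun ε : ℝ =>
        Complex.I ^ n * (((2 * Real.pi) ^ n : ℝ) : ℂ)⁻¹ *
          ∫ v : Fin n ⊕ Fin n → ℝ,
            Complex.exp (-(1/2) *
              ((fun i => (v i : ℂ)) ⬝ᵥ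
                (((ε : ℂ) • (1 : Matrix (Fin n ⊕ Fin n) (Fin n ⊕ Fin n) ℂ)
                  + Complex.I • (Matrix.J (Fin n) ℝ * X).map (fun x => (x : ℂ)))
                  *ᵥ fun i => (v i : ℂ)))))
      (nhdsWithin 0 (Set.Ioi 0))
      (nhds (Complex.I ^ q * ((|X.det| ^ (-(1/2) : ℝ) : ℝ) : ℂ))) := by
  classical
  set A : Matrix (Fin n ⊕ Fin n) (Fin n ⊕ Fin n) ℝ := Matrix.J (Fin n) ℝ * X with hA
  set lam := hJX.eigenvalues with hlamdef
  -- eigenvalues nonzero, determinant facts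
  have hdetprod : A.det = ∏ i, lam i := by
    have h := hJX.det_eq_prod_eigenvalues
    simpa using h
  have hlam_ne : ∀ i, lam i ≠ 0 := by
    intro i hi
    exact hdet (by rw [hdetprod]; exact Finset.prod_eq_zero (Finset.mem_univ i) hi)
  have hdetJ : |Matrix.det (Matrix.J (Fin n) ℝ)| = 1 := by
    have h2 := Matrix.J_det_mul_J_det (Fin n) ℝ
    have h1 : |Matrix.det (Matrix.J (Fin n) ℝ)| * |Matrix.det (Matrix.J (Fin n) ℝ)| = 1 := by
      rw [← abs_mul, h2, abs_one]
    nlinarith [abs_nonneg (Matrix.det (Matrix.J (Fin n) ℝ))]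
  have hdetAX : |A.det| = |X.det| := by
    rw [hA, Matrix.det_mul, abs_mul, hdetJ, one_mul]
  have hXdet_pos : 0 < |X.det| := by
    rw [← hdetAX]
    exact abs_pos.2 hdet
  have habsprod : ∏ i, |lam i| = |X.det| := by
    rw [← hdetAX, hdetprod, Finset.abs_prod]
  -- Step 1: on Ioi 0, the function equals g
  set g : ℝ → ℂ := fun ε => Complex.I ^ n * (((2 * Real.pi) ^ n : ℝ) : ℂ)⁻¹ *
    ∏ i, ((Real.pi:ℂ) / (((ε:ℂ) + Complex.I * lam i)/2)) ^ (1/2 : ℂ) with hgdef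
  have hev : g =ᶠ[nhdsWithin 0 (Set.Ioi 0)] (fun ε : ℝ =>
      Complex.I ^ n * (((2 * Real.pi) ^ n : ℝ) : ℂ)⁻¹ *
        ∫ v : Fin n ⊕ Fin n → ℝ,
          Complex.exp (-(1/2) *
            ((fun i => (v i : ℂ)) ⬝ᵥ
              (((ε : ℂ) • (1 : Matrix (Fin n ⊕ Fin n) (Fin n ⊕ Fin n) ℂ)
                + Complex.I • A.map (fun x => (x : ℂ)))
                *ᵥ fun i => (v i : ℂ))))) := by
    filter_upwards [self_mem_nhdsWithin] with ε hε
    rw [hgdef]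
    simp only
    rw [gauss_int' A hJX (Set.mem_Ioi.1 hε)]
  -- Step 2: limit of g
  have hgt0 : Tendsto g (nhdsWithin 0 (Set.Ioi 0)) (nhds (Complex.I ^ n *
      (((2 * Real.pi) ^ n : ℝ) : ℂ)⁻¹ *
      ∏ i, ((Real.pi:ℂ) / ((Complex.I * lam i)/2)) ^ (1/2 : ℂ))) := by
    apply Tendsto.mono_left _ nhdsWithin_le_nhds
    apply Tendsto.mul tendsto_const_nhds
    apply tendsto_finset_prod
    intro i _
    have hlne : (Complex.I * lam i) / 2 ≠ 0 := by
      simp [Complex.I_ne_zero]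
      exact_mod_cast hlam_ne i
    have hbase : Tendsto (fun ε : ℝ => (Real.pi:ℂ) / (((ε:ℂ) + Complex.I * lam i)/2))
        (nhds 0) (nhds ((Real.pi:ℂ) / ((Complex.I * lam i)/2))) := by
      have hc : ContinuousAt (fun ε : ℝ => (Real.pi:ℂ) / (((ε:ℂ) + Complex.I * lam i)/2)) 0 := by
        apply ContinuousAt.div continuousAt_const (by fun_prop)
        simpa using hlne
      simpa using hc.tendsto
    have hslit : (Real.pi:ℂ) / ((Complex.I * lam i)/2) ∈ Complex.slitPlane := by
      rw [base_eq' (hlam_ne i)]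
      rw [Complex.mem_slitPlane_iff]
      right
      have : 2 * Real.pi / lam i ≠ 0 := by
        apply div_ne_zero (by positivity) (hlam_ne i)
      simpa using this
    exact Filter.Tendsto.comp (continuousAt_cpow_const hslit) hbase
  -- Step 3: identify the limit
  have hL : Complex.I ^ n * (((2 * Real.pi) ^ n : ℝ) : ℂ)⁻¹ *
      ∏ i, ((Real.pi:ℂ) / ((Complex.I * lam i)/2)) ^ (1/2 : ℂ)
      = Complex.I ^ q * ((|X.det| ^ (-(1/2) : ℝ) : ℝ) : ℂ) := by
    rw [Finset.prod_congr rfl (fun i _ => sqrt_val' (hlam_ne i)), Finset.prod_mul_distrib]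
    have hcard : (Finset.univ : Finset (Fin n ⊕ Fin n)).card = 2 * n := by
      simp [Finset.card_univ]
      omega
    -- magnitude part
    have hP1r : ∏ i, Real.sqrt (2*Real.pi/|lam i|) = (2*Real.pi)^n / Real.sqrt |X.det| := by
      have h1 : ∀ i : Fin n ⊕ Fin n, Real.sqrt (2*Real.pi/|lam i|)
          = Real.sqrt (2*Real.pi) / Real.sqrt |lam i| :=
        fun i => Real.sqrt_div (by positivity) _
      rw [Finset.prod_congr rfl (fun i _ => h1 i), Finset.prod_div_distrib, Finset.prod_const,
        hcard]
      have h2 : Real.sqrt (2*Real.pi) ^ (2*n) = (2*Real.pi)^n := by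
        rw [pow_mul, Real.sq_sqrt (by positivity)]
      have h3 : ∏ i, Real.sqrt |lam i| = Real.sqrt |X.det| := by
        rw [← habsprod]
        have h4 := Real.finset_prod_rpow Finset.univ (fun i => |lam i|)
          (fun i _ => abs_nonneg _) (1/2)
        simp_rw [← Real.sqrt_eq_rpow] at h4
        exact h4
      rw [h2, h3]
    -- phase part
    have hfilt : Finset.univ.filter (fun i => ¬ 0 < lam i)
        = Finset.univ.filter (fun i : Fin n ⊕ Fin n => lam i < 0) := by
      apply Finset.filter_congr
      intro i _
      constructor
      · intro h
        exact lt_of_le_of_ne (not_lt.1 h) (hlam_ne i)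
      · intro h
        exact not_lt.2 h.le
    have hsum : ∑ i, (if 0 < lam i then -(Real.pi/4) else Real.pi/4)
        = (Real.pi/4) * q - (Real.pi/4) * p := by
      rw [Finset.sum_ite, Finset.sum_const, Finset.sum_const, hfilt, ← hp, ← hq]
      simp [nsmul_eq_mul]
      ring
    rw [← Complex.ofReal_prod, hP1r, ← Complex.exp_sum]
    have hsumC : ∑ i, (((if 0 < lam i then -(Real.pi/4) else Real.pi/4 : ℝ)):ℂ) * Complex.I
        = ((((Real.pi/4) * q - (Real.pi/4) * p : ℝ)):ℂ) * Complex.I := by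
      rw [← Finset.sum_mul, ← Complex.ofReal_sum, hsum]
    rw [hsumC]
    have hI : Complex.I = Complex.exp (((Real.pi/2 : ℝ) : ℂ) * Complex.I) := by
      rw [Complex.exp_mul_I]
      push_cast
      simp
    have hexpI : ∀ m : ℕ, Complex.exp ((m:ℂ) * (((Real.pi/2 : ℝ)):ℂ) * Complex.I)
        = Complex.I ^ m := by
      intro m
      rw [mul_assoc, Complex.exp_nat_mul, ← hI]
    have hphase : Complex.I ^ n *
        Complex.exp (((((Real.pi/4) * q - (Real.pi/4) * p : ℝ)):ℂ) * Complex.I)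
        = Complex.I ^ q := by
      have hpq'' : (p:ℂ) + (q:ℂ) = 2*(n:ℂ) := by exact_mod_cast hpq
      rw [← hexpI n, ← hexpI q, ← Complex.exp_add]
      congr 1
      push_cast
      linear_combination (-(Real.pi:ℂ)/4 * Complex.I) * hpq''
    have hmag : (((2 * Real.pi) ^ n : ℝ) : ℂ)⁻¹
        * (((2*Real.pi)^n / Real.sqrt |X.det| : ℝ) : ℂ)
        = ((|X.det| ^ (-(1/2) : ℝ) : ℝ) : ℂ) := by
      rw [← Complex.ofReal_inv, ← Complex.ofReal_mul]
      congr 1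
      rw [Real.rpow_neg (abs_nonneg _),
        show |X.det| ^ ((1:ℝ)/2) = Real.sqrt |X.det| from (Real.sqrt_eq_rpow _).symm]
      have h2pi : ((2*Real.pi)^n : ℝ) ≠ 0 := by positivity
      field_simp
    calc Complex.I ^ n * (((2 * Real.pi) ^ n : ℝ) : ℂ)⁻¹ *
          ((((2*Real.pi)^n / Real.sqrt |X.det| : ℝ) : ℂ) *
            Complex.exp (((((Real.pi/4) * q - (Real.pi/4) * p : ℝ)):ℂ) * Complex.I))
        = (Complex.I ^ n *
            Complex.exp (((((Real.pi/4) * q - (Real.pi/4) * p : ℝ)):ℂ) * Complex.I)) *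
          ((((2 * Real.pi) ^ n : ℝ) : ℂ)⁻¹ *
            (((2*Real.pi)^n / Real.sqrt |X.det| : ℝ) : ℂ)) := by ring
      _ = Complex.I ^ q * ((|X.det| ^ (-(1/2) : ℝ) : ℝ) : ℂ) := by rw [hphase, hmag]
  exact Tendsto.congr' hev (hL ▸ hgt0)
end

section
/- Let n = 2k be even and let X, Y be real antisymmetric n×n matrices. Then Pf(X + Y) = Σ_J ε(J,J′) · Pf(X_J) · Pf(Y_{J′}), where the sum runs over all subsets J ⊆ {1,…,n} of even cardinality, J′ = {1,…,n} \ J is the complement, X_J (resp. Y_{J′}) is the principal submatrix of X (resp. Y) on the rows and columns indexed by J (resp. J′), and ε(J,J′) ∈ {±1} is the sign of the permutation of {1,…,n} that lists the elements of J in increasing order followed by the elements of J′ in increasing order. -/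
open Matrix Equiv

/-- The Pfaffian of a real `n×n` matrix: for `n = 2k`,
`Pf(A) = (1/(2^k k!)) Σ_{σ ∈ S_{2k}} sgn(σ) ∏_{i=1}^k A_{σ(2i-1), σ(2i)}`
(with `0`-based indexing, the pairs are `(σ(2i), σ(2i+1))` for `i = 0, …, k-1`);
for `n` odd it is `0` (and for `n = 0` it is `1`). -/
noncomputable def pfaffian {n : ℕ} (A : Matrix (Fin n) (Fin n) ℝ) : ℝ :=
  if h : n % 2 = 0 then
    (1 / (2 ^ (n / 2) * (Nat.factorial (n / 2)) : ℝ)) *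
      ∑ σ : Equiv.Perm (Fin n),
        ((Equiv.Perm.sign σ : ℤ) : ℝ) *
          ∏ i : Fin (n / 2),
            A (σ ⟨2 * i.val, by have := i.isLt; omega⟩)
              (σ ⟨2 * i.val + 1, by have := i.isLt; omega⟩)
  else 0

/-- The principal submatrix of `A` on the rows and columns indexed by the finite set `J`,
listed in increasing order. -/
def principalSubmatrix {n : ℕ} (A : Matrix (Fin n) (Fin n) ℝ) (J : Finset (Fin n)) :
    Matrix (Fin J.card) (Fin J.card) ℝ :=
  A.submatrix (fun a => (J.orderIsoOfFin rfl a : Fin n))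
    (fun a => (J.orderIsoOfFin rfl a : Fin n))

/-- The permutation of `{0, …, n-1}` which lists the elements of `J` in increasing order
followed by the elements of the complement `Jᶜ` in increasing order; its sign is the
constant `ε(J, J′)`. -/
noncomputable def blockPerm {n : ℕ} (J : Finset (Fin n)) : Equiv.Perm (Fin n) :=
  ((finCongr (by
      have := Finset.card_add_card_compl J
      simp only [Fintype.card_fin] at this
      omega : n = J.card + Jᶜ.card)).trans
    ((finSumFinEquiv (m := J.card) (n := Jᶜ.card)).symm.trans
      ((Equiv.sumCongr (J.orderIsoOfFin rfl).toEquiv ((Jᶜ).orderIsoOfFin rfl).toEquiv).trans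
        ((Equiv.sumCongr (Equiv.refl J)
            (Equiv.subtypeEquivRight (fun x => by simp))).trans
          (Equiv.sumCompl (· ∈ J))))))

/-- the un-normalized pfaffian sum -/
noncomputable def pfS (k : ℕ) (A : Matrix (Fin (2*k)) (Fin (2*k)) ℝ) : ℝ :=
  ∑ σ : Equiv.Perm (Fin (2*k)),
    ((Equiv.Perm.sign σ : ℤ) : ℝ) *
      ∏ i : Fin k,
        A (σ ⟨2 * i.val, by have := i.isLt; omega⟩)
          (σ ⟨2 * i.val + 1, by have := i.isLt; omega⟩)

lemma pfaffian_eq_pfS (k : ℕ) (A : Matrix (Fin (2*k)) (Fin (2*k)) ℝ) :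
    pfaffian A = (1 / (2 ^ k * (Nat.factorial k) : ℝ)) * pfS k A := by
  have h2 : (2*k) % 2 = 0 := by omega
  have hk : (2*k) / 2 = k := by omega
  rw [pfaffian, dif_pos h2, pfS]
  congr 1
  · rw [hk]
  · apply Finset.sum_congr rfl
    intro σ _
    congr 1
    exact Fintype.prod_equiv (finCongr hk) _ _ (fun x => rfl)

lemma pfS_eq (k : ℕ) (A : Matrix (Fin (2*k)) (Fin (2*k)) ℝ) :
    pfS k A = (2 ^ k * (Nat.factorial k) : ℝ) * pfaffian A := by
  rw [pfaffian_eq_pfS]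
  have : (2 ^ k * (Nat.factorial k) : ℝ) ≠ 0 := by positivity
  field_simp

lemma pfaffian_cast {n n' : ℕ} (h : n = n') (A : Matrix (Fin n) (Fin n) ℝ) :
    pfaffian (A.submatrix (Fin.cast h.symm) (Fin.cast h.symm)) = pfaffian A := by
  subst h
  simp


lemma card_compl_eq {n : ℕ} (J : Finset (Fin n)) : Jᶜ.card = n - J.card := by
  have := Finset.card_add_card_compl J
  simp only [Fintype.card_fin] at this
  omega

lemma card_le_n {n : ℕ} (J : Finset (Fin n)) : J.card ≤ n := by
  have := Finset.card_add_card_compl J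
  simp only [Fintype.card_fin] at this
  omega

lemma blockPerm_apply_lt {n : ℕ} (J : Finset (Fin n)) (a : Fin n) (h : a.val < J.card) :
    blockPerm J a = (J.orderIsoOfFin rfl ⟨a.val, h⟩ : Fin n) := by
  unfold blockPerm
  simp only [Equiv.trans_apply, finCongr_apply]
  have key : ∀ (hn : n = J.card + Jᶜ.card),
      Fin.cast hn a = Fin.castAdd Jᶜ.card ⟨a.val, h⟩ := fun _ => Fin.ext rfl
  rw [key, finSumFinEquiv_symm_apply_castAdd]
  simp

lemma blockPerm_apply_ge {n : ℕ} (J : Finset (Fin n)) (a : Fin n) (h : J.card ≤ a.val)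
    (hma : a.val - J.card < Jᶜ.card) :
    blockPerm J a = (Jᶜ.orderIsoOfFin rfl ⟨a.val - J.card, hma⟩ : Fin n) := by
  unfold blockPerm
  simp only [Equiv.trans_apply, finCongr_apply]
  have key : ∀ (hn : n = J.card + Jᶜ.card),
      Fin.cast hn a = Fin.natAdd J.card ⟨a.val - J.card, hma⟩ := fun _ => Fin.ext (by
        simp only [Fin.coe_cast, Fin.natAdd]
        omega)
  rw [key, finSumFinEquiv_symm_apply_natAdd]
  simp [Equiv.subtypeEquivRight]
  rfl

lemma blockPerm_mem_iff {n : ℕ} (J : Finset (Fin n)) (a : Fin n) :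
    blockPerm J a ∈ J ↔ a.val < J.card := by
  rcases lt_or_ge a.val J.card with h | h
  · rw [blockPerm_apply_lt J a h]
    exact iff_of_true (Finset.coe_mem _) h
  · have hma : a.val - J.card < Jᶜ.card := by
      have := a.isLt
      have := Finset.card_add_card_compl J
      simp only [Fintype.card_fin] at this
      omega
    rw [blockPerm_apply_ge J a h hma]
    exact iff_of_false (fun hmem => (Finset.mem_compl.mp (Finset.coe_mem _)) hmem) (by omega)

/-- the permutation of `Fin (2*k)` sending `2i+r ↦ 2π(i)+r`. -/
def doublePerm {k : ℕ} (π : Equiv.Perm (Fin k)) : Equiv.Perm (Fin (2*k)) :=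
  ((finProdFinEquiv (m := k) (n := 2)).trans (finCongr (mul_comm k 2))).permCongr
    (Equiv.prodCongrLeft (fun _ : Fin 2 => π))

lemma doublePerm_apply {k : ℕ} (π : Equiv.Perm (Fin k)) (i : Fin k) (r : Fin 2) :
    doublePerm π ⟨2 * i.val + r.val, by have := i.isLt; have := r.isLt; omega⟩ =
      ⟨2 * (π i).val + r.val, by have := (π i).isLt; have := r.isLt; omega⟩ := by
  unfold doublePerm
  have he : ((finProdFinEquiv (m := k) (n := 2)).trans (finCongr (mul_comm k 2)))
      (i, r) = ⟨2 * i.val + r.val, by have := i.isLt; have := r.isLt; omega⟩ := by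
    apply Fin.ext
    simp [finProdFinEquiv]
    omega
  rw [Equiv.permCongr_apply, ← he, Equiv.symm_apply_apply]
  have : Equiv.prodCongrLeft (fun _ : Fin 2 => π) (i, r) = (π i, r) := rfl
  rw [this]
  apply Fin.ext
  simp [finProdFinEquiv]
  omega

lemma sign_doublePerm {k : ℕ} (π : Equiv.Perm (Fin k)) :
    Equiv.Perm.sign (doublePerm π) = 1 := by
  unfold doublePerm
  rw [Equiv.Perm.sign_permCongr, Equiv.Perm.sign_prodCongrLeft]
  simp [Int.units_mul_self]

/-- block-diagonal join of two permutations -/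
def mixPerm {a b n : ℕ} (h : a + b = n) (σ₁ : Equiv.Perm (Fin a)) (σ₂ : Equiv.Perm (Fin b)) :
    Equiv.Perm (Fin n) :=
  (finSumFinEquiv.trans (finCongr h)).permCongr (Equiv.sumCongr σ₁ σ₂)

lemma sign_mixPerm {a b n : ℕ} (h : a + b = n) (σ₁ : Equiv.Perm (Fin a))
    (σ₂ : Equiv.Perm (Fin b)) :
    Equiv.Perm.sign (mixPerm h σ₁ σ₂) = Equiv.Perm.sign σ₁ * Equiv.Perm.sign σ₂ := by
  unfold mixPerm
  rw [Equiv.Perm.sign_permCongr, Equiv.Perm.sign_sumCongr]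

lemma mixPerm_apply_lt {a b n : ℕ} (h : a + b = n) (σ₁ : Equiv.Perm (Fin a))
    (σ₂ : Equiv.Perm (Fin b)) (x : Fin n) (hx : x.val < a) :
    mixPerm h σ₁ σ₂ x = ⟨(σ₁ ⟨x.val, hx⟩).val, by have := (σ₁ ⟨x.val, hx⟩).isLt; omega⟩ := by
  unfold mixPerm
  rw [Equiv.permCongr_apply]
  have key : (finSumFinEquiv.trans (finCongr h)).symm x = Sum.inl ⟨x.val, hx⟩ := by
    rw [Equiv.symm_apply_eq]
    apply Fin.ext
    simp
  rw [key]
  apply Fin.ext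
  simp

lemma mixPerm_apply_ge {a b n : ℕ} (h : a + b = n) (σ₁ : Equiv.Perm (Fin a))
    (σ₂ : Equiv.Perm (Fin b)) (x : Fin n) (hx : a ≤ x.val) (hx2 : x.val - a < b) :
    mixPerm h σ₁ σ₂ x = ⟨a + (σ₂ ⟨x.val - a, hx2⟩).val,
      by have := (σ₂ ⟨x.val - a, hx2⟩).isLt; omega⟩ := by
  unfold mixPerm
  rw [Equiv.permCongr_apply]
  have key : (finSumFinEquiv.trans (finCongr h)).symm x = Sum.inr ⟨x.val - a, hx2⟩ := by
    rw [Equiv.symm_apply_eq]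
    apply Fin.ext
    simp
    omega
  rw [key]
  apply Fin.ext
  simp

section Key

variable {k m : ℕ}

/-- the decomposition map -/
noncomputable def Phi (k m : ℕ) (hm : m ≤ k)
    (p : {J : Finset (Fin (2*k)) // J.card = 2*m} ×
      Equiv.Perm (Fin (2*m)) × Equiv.Perm (Fin (2*(k-m)))) : Equiv.Perm (Fin (2*k)) :=
  blockPerm p.1.1 * mixPerm (by omega) p.2.1 p.2.2

lemma Phi_mem_iff (hm : m ≤ k) (p) (x : Fin (2*k)) :
    Phi k m hm p x ∈ p.1.1 ↔ x.val < 2*m := by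
  obtain ⟨⟨J, hJ⟩, σ₁, σ₂⟩ := p
  have hx := x.isLt
  rcases lt_or_ge x.val (2*m) with h | h
  · rw [show (Phi k m hm (⟨⟨J, hJ⟩, σ₁, σ₂⟩) x) =
      blockPerm J (mixPerm (by omega) σ₁ σ₂ x) from rfl, mixPerm_apply_lt _ _ _ _ h,
      blockPerm_mem_iff]
    exact iff_of_true (by simp only [hJ]; exact (σ₁ ⟨x.val, h⟩).isLt) h
  · have h2 : x.val - 2*m < 2*(k-m) := by omega
    rw [show (Phi k m hm (⟨⟨J, hJ⟩, σ₁, σ₂⟩) x) =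
      blockPerm J (mixPerm (by omega) σ₁ σ₂ x) from rfl, mixPerm_apply_ge _ _ _ _ h h2,
      blockPerm_mem_iff]
    exact iff_of_false (by simp only [hJ]; omega) (by omega)

lemma Phi_injective (hm : m ≤ k) : Function.Injective (Phi k m hm) := by
  rintro ⟨⟨J, hJ⟩, σ₁, σ₂⟩ ⟨⟨J', hJ'⟩, σ₁', σ₂'⟩ heq
  have hJeq : J = J' := by
    ext j
    have h1 := Phi_mem_iff hm ⟨⟨J, hJ⟩, σ₁, σ₂⟩ ((Phi k m hm ⟨⟨J, hJ⟩, σ₁, σ₂⟩)⁻¹ j)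
    have h2 := Phi_mem_iff hm ⟨⟨J', hJ'⟩, σ₁', σ₂'⟩ ((Phi k m hm ⟨⟨J', hJ'⟩, σ₁', σ₂'⟩)⁻¹ j)
    rw [Equiv.Perm.inv_def, Equiv.apply_symm_apply] at h1 h2
    rw [h1, heq, h2]
  subst hJeq
  have hmix : mixPerm (by omega : 2*m + 2*(k-m) = 2*k) σ₁ σ₂ =
      mixPerm (by omega) σ₁' σ₂' := by
    have heq' : blockPerm J * mixPerm (by omega : 2*m + 2*(k-m) = 2*k) σ₁ σ₂ =
        blockPerm J * mixPerm (by omega) σ₁' σ₂' := heq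
    exact mul_left_cancel heq'
  have hσ₁ : σ₁ = σ₁' := by
    ext x
    have hx : (2*m : ℕ) > x.val := x.isLt
    have e1 := mixPerm_apply_lt (by omega : 2*m + 2*(k-m) = 2*k) σ₁ σ₂
      ⟨x.val, by omega⟩ (by exact hx)
    have e2 := mixPerm_apply_lt (by omega : 2*m + 2*(k-m) = 2*k) σ₁' σ₂'
      ⟨x.val, by omega⟩ (by exact hx)
    rw [hmix] at e1
    rw [e2] at e1
    have := congrArg Fin.val e1
    simpa using this.symm
  have hσ₂ : σ₂ = σ₂' := by
    ext x
    have hx := x.isLt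
    have hge : (2*m : ℕ) ≤ 2*m + x.val := by omega
    have e1 := mixPerm_apply_ge (by omega : 2*m + 2*(k-m) = 2*k) σ₁ σ₂
      ⟨2*m + x.val, by omega⟩ hge (by simpa using hx)
    have e2 := mixPerm_apply_ge (by omega : 2*m + 2*(k-m) = 2*k) σ₁' σ₂'
      ⟨2*m + x.val, by omega⟩ hge (by simpa using hx)
    rw [hmix] at e1
    rw [e2] at e1
    have hval := congrArg Fin.val e1
    simp only at hval
    have h3 : 2*m + x.val - 2*m = x.val := by omega
    simp only [h3, Fin.eta] at hval
    omega
  simp [hσ₁, hσ₂]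

lemma Phi_bijective (hm : m ≤ k) : Function.Bijective (Phi k m hm) := by
  rw [Fintype.bijective_iff_injective_and_card]
  refine ⟨Phi_injective hm, ?_⟩
  rw [Fintype.card_prod, Fintype.card_prod, Fintype.card_perm, Fintype.card_perm,
    Fintype.card_perm, Fintype.card_subtype, Fintype.card_fin]
  have h1 : (Finset.univ.filter (fun J : Finset (Fin (2*k)) => J.card = 2*m)) =
      Finset.powersetCard (2*m) Finset.univ := by
    rw [Finset.powersetCard_eq_filter]
    simp [Finset.powerset_univ]
  rw [h1, Finset.card_powersetCard, Finset.card_univ, Fintype.card_fin]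
  have h2 : 2*(k-m) = 2*k - 2*m := by omega
  rw [h2]
  rw [← Nat.choose_mul_factorial_mul_factorial (by omega : 2*m ≤ 2*k)]
  simp only [Fintype.card_fin]
  ring

end Key

section Key2

variable {k m : ℕ}

lemma Phi_entry_lt (hm : m ≤ k) (J : Finset (Fin (2*k))) (hJ : J.card = 2*m)
    (σ₁ : Equiv.Perm (Fin (2*m))) (σ₂ : Equiv.Perm (Fin (2*(k-m))))
    (v : ℕ) (hv : v < 2*m) :
    Phi k m hm ⟨⟨J, hJ⟩, σ₁, σ₂⟩ ⟨v, by omega⟩ =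
      (J.orderIsoOfFin rfl ⟨(σ₁ ⟨v, hv⟩).val,
        by rw [hJ]; exact (σ₁ ⟨v, hv⟩).isLt⟩ : Fin (2*k)) := by
  show blockPerm J (mixPerm (by omega) σ₁ σ₂ ⟨v, by omega⟩) = _
  rw [mixPerm_apply_lt _ _ _ _ (show ((⟨v, by omega⟩ : Fin (2*k))).val < 2*m from hv)]
  rw [blockPerm_apply_lt _ _ (by rw [hJ]; exact (σ₁ ⟨v, hv⟩).isLt)]

lemma Phi_entry_ge (hm : m ≤ k) (J : Finset (Fin (2*k))) (hJ : J.card = 2*m)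
    (σ₁ : Equiv.Perm (Fin (2*m))) (σ₂ : Equiv.Perm (Fin (2*(k-m))))
    (v : ℕ) (hv1 : 2*m ≤ v) (hv2 : v < 2*k) :
    Phi k m hm ⟨⟨J, hJ⟩, σ₁, σ₂⟩ ⟨v, hv2⟩ =
      (Jᶜ.orderIsoOfFin rfl ⟨(σ₂ ⟨v - 2*m, by omega⟩).val,
        by rw [card_compl_eq, hJ]; have := (σ₂ ⟨v - 2*m, by omega⟩).isLt; omega⟩ : Fin (2*k)) := by
  have hv3 : v - 2*m < 2*(k-m) := by omega
  have hs := (σ₂ ⟨v - 2*m, hv3⟩).isLt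
  have key : mixPerm (by omega : 2*m+2*(k-m)=2*k) σ₁ σ₂ ⟨v, hv2⟩ =
      ⟨2*m + (σ₂ ⟨v - 2*m, hv3⟩).val, by omega⟩ :=
    mixPerm_apply_ge _ σ₁ σ₂ ⟨v, hv2⟩ hv1 hv3
  show blockPerm J (mixPerm (by omega) σ₁ σ₂ ⟨v, hv2⟩) = _
  rw [key]
  have hge : J.card ≤ (⟨2*m + (σ₂ ⟨v - 2*m, hv3⟩).val, by omega⟩ : Fin (2*k)).val := by
    simp only [Fin.val_mk, hJ]; omega
  have hma : (⟨2*m + (σ₂ ⟨v - 2*m, hv3⟩).val, by omega⟩ : Fin (2*k)).val - J.card < Jᶜ.card := by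
    simp only [Fin.val_mk, hJ, card_compl_eq]; omega
  rw [blockPerm_apply_ge _ _ hge hma]
  congr 1
  congr 1
  apply Fin.ext
  simp only [Fin.val_mk, hJ]
  omega

end Key2

section Key3

variable {k m : ℕ}

lemma prod_entry (hm : m ≤ k) (X Y : Matrix (Fin (2*k)) (Fin (2*k)) ℝ)
    (J : Finset (Fin (2*k))) (hJ : J.card = 2*m)
    (hJc : Jᶜ.card = 2*(k-m))
    (σ₁ : Equiv.Perm (Fin (2*m))) (σ₂ : Equiv.Perm (Fin (2*(k-m)))) :
    (∏ i : Fin k, (if i.val < m then X else Y)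
       (Phi k m hm ⟨⟨J, hJ⟩, σ₁, σ₂⟩ ⟨2*i.val, by have := i.isLt; omega⟩)
       (Phi k m hm ⟨⟨J, hJ⟩, σ₁, σ₂⟩ ⟨2*i.val+1, by have := i.isLt; omega⟩)) =
    (∏ i : Fin m, ((principalSubmatrix X J).submatrix (Fin.cast hJ.symm) (Fin.cast hJ.symm))
        (σ₁ ⟨2*i.val, by have := i.isLt; omega⟩)
        (σ₁ ⟨2*i.val+1, by have := i.isLt; omega⟩)) *
    (∏ i : Fin (k-m), ((principalSubmatrix Y Jᶜ).submatrix (Fin.cast hJc.symm) (Fin.cast hJc.symm))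
        (σ₂ ⟨2*i.val, by have := i.isLt; omega⟩)
        (σ₂ ⟨2*i.val+1, by have := i.isLt; omega⟩)) := by
  classical
  have hkm : m + (k-m) = k := by omega
  rw [← Equiv.prod_comp (finCongr hkm), Fin.prod_univ_add]
  congr 1
  · apply Finset.prod_congr rfl
    intro a _
    simp only [finCongr_apply, Fin.coe_cast, Fin.coe_castAdd]
    rw [if_pos a.isLt]
    rw [Phi_entry_lt hm J hJ σ₁ σ₂ (2*a.val) (by have := a.isLt; omega),
        Phi_entry_lt hm J hJ σ₁ σ₂ (2*a.val+1) (by have := a.isLt; omega)]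
    rfl
  · apply Finset.prod_congr rfl
    intro b _
    simp only [finCongr_apply, Fin.coe_cast, Fin.coe_natAdd]
    rw [if_neg (by omega)]
    rw [Phi_entry_ge hm J hJ σ₁ σ₂ (2*(m+b.val)) (by omega) (by have := b.isLt; omega),
        Phi_entry_ge hm J hJ σ₁ σ₂ (2*(m+b.val)+1) (by omega) (by have := b.isLt; omega)]
    simp only [show 2*(m+b.val) - 2*m = 2*b.val from by omega,
      show 2*(m+b.val)+1 - 2*m = 2*b.val+1 from by omega]
    rfl

end Key3

section Key4

variable {k m : ℕ}

lemma T_eq (hm : m ≤ k) (X Y : Matrix (Fin (2*k)) (Fin (2*k)) ℝ) :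
    (∑ σ : Equiv.Perm (Fin (2*k)), ((Equiv.Perm.sign σ : ℤ) : ℝ) *
       ∏ i : Fin k, (if i.val < m then X else Y)
         (σ ⟨2*i.val, by have := i.isLt; omega⟩)
         (σ ⟨2*i.val+1, by have := i.isLt; omega⟩)) =
    ∑ J ∈ Finset.univ.filter (fun J : Finset (Fin (2*k)) => J.card = 2*m),
      ((Equiv.Perm.sign (blockPerm J) : ℤ) : ℝ) *
        ((2^m * (Nat.factorial m) : ℝ) * pfaffian (principalSubmatrix X J)) *
        ((2^(k-m) * (Nat.factorial (k-m)) : ℝ) * pfaffian (principalSubmatrix Y Jᶜ)) := by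
  classical
  have step1 := Fintype.sum_bijective (Phi k m hm) (Phi_bijective hm)
    (fun p : {J : Finset (Fin (2*k)) // J.card = 2*m} ×
        Equiv.Perm (Fin (2*m)) × Equiv.Perm (Fin (2*(k-m))) =>
      ((Equiv.Perm.sign (Phi k m hm p) : ℤ) : ℝ) *
        ∏ i : Fin k, (if i.val < m then X else Y)
          (Phi k m hm p ⟨2*i.val, by have := i.isLt; omega⟩)
          (Phi k m hm p ⟨2*i.val+1, by have := i.isLt; omega⟩))
    (fun σ => ((Equiv.Perm.sign σ : ℤ) : ℝ) *
        ∏ i : Fin k, (if i.val < m then X else Y)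
          (σ ⟨2*i.val, by have := i.isLt; omega⟩)
          (σ ⟨2*i.val+1, by have := i.isLt; omega⟩))
    (fun p => rfl)
  rw [← step1, Fintype.sum_prod_type]
  rw [Finset.sum_subtype (p := fun J : Finset (Fin (2*k)) => J.card = 2*m) (Finset.univ.filter
      (fun J : Finset (Fin (2*k)) => J.card = 2*m)) (fun J => by simp) (fun J =>
      ((Equiv.Perm.sign (blockPerm J) : ℤ) : ℝ) *
        ((2^m * (Nat.factorial m) : ℝ) * pfaffian (principalSubmatrix X J)) *
        ((2^(k-m) * (Nat.factorial (k-m)) : ℝ) * pfaffian (principalSubmatrix Y Jᶜ)))]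
  apply Finset.sum_congr rfl
  rintro ⟨J, hJ⟩ -
  have hJc : Jᶜ.card = 2*(k-m) := by rw [card_compl_eq, hJ]; omega
  rw [Fintype.sum_prod_type]
  -- rewrite each term
  have hterm : ∀ (σ₁ : Equiv.Perm (Fin (2*m))) (σ₂ : Equiv.Perm (Fin (2*(k-m)))),
      ((Equiv.Perm.sign (Phi k m hm ⟨⟨J, hJ⟩, σ₁, σ₂⟩) : ℤ) : ℝ) *
        ∏ i : Fin k, (if i.val < m then X else Y)
          (Phi k m hm ⟨⟨J, hJ⟩, σ₁, σ₂⟩ ⟨2*i.val, by have := i.isLt; omega⟩)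
          (Phi k m hm ⟨⟨J, hJ⟩, σ₁, σ₂⟩ ⟨2*i.val+1, by have := i.isLt; omega⟩) =
      ((Equiv.Perm.sign (blockPerm J) : ℤ) : ℝ) *
        (((Equiv.Perm.sign σ₁ : ℤ) : ℝ) *
          ∏ i : Fin m, ((principalSubmatrix X J).submatrix (Fin.cast hJ.symm) (Fin.cast hJ.symm))
            (σ₁ ⟨2*i.val, by have := i.isLt; omega⟩)
            (σ₁ ⟨2*i.val+1, by have := i.isLt; omega⟩)) *
        (((Equiv.Perm.sign σ₂ : ℤ) : ℝ) *
          ∏ i : Fin (k-m), ((principalSubmatrix Y Jᶜ).submatrix (Fin.cast hJc.symm) (Fin.cast hJc.symm))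
            (σ₂ ⟨2*i.val, by have := i.isLt; omega⟩)
            (σ₂ ⟨2*i.val+1, by have := i.isLt; omega⟩)) := by
    intro σ₁ σ₂
    have hsgn : Equiv.Perm.sign (Phi k m hm ⟨⟨J, hJ⟩, σ₁, σ₂⟩) =
        Equiv.Perm.sign (blockPerm J) * (Equiv.Perm.sign σ₁ * Equiv.Perm.sign σ₂) := by
      show Equiv.Perm.sign (blockPerm J * mixPerm (by omega) σ₁ σ₂) = _
      rw [_root_.map_mul, sign_mixPerm]
    rw [hsgn, prod_entry hm X Y J hJ hJc σ₁ σ₂]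
    push_cast
    ring
  simp only [hterm]
  trans (((Equiv.Perm.sign (blockPerm J) : ℤ) : ℝ) *
      (pfS m ((principalSubmatrix X J).submatrix (Fin.cast hJ.symm) (Fin.cast hJ.symm)) *
       pfS (k-m) ((principalSubmatrix Y Jᶜ).submatrix (Fin.cast hJc.symm) (Fin.cast hJc.symm))))
  · simp only [pfS]
    rw [Finset.sum_mul_sum, Finset.mul_sum]
    apply Finset.sum_congr rfl; intro σ₁ _
    rw [Finset.mul_sum]
    apply Finset.sum_congr rfl; intro σ₂ _
    ring
  · rw [pfS_eq, pfS_eq, pfaffian_cast hJ (principalSubmatrix X J),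
      pfaffian_cast hJc (principalSubmatrix Y Jᶜ)]
    ring

end Key4

section Key5

variable {k : ℕ}

lemma doublePerm_apply₀ (π : Equiv.Perm (Fin k)) (i : Fin k) :
    doublePerm π ⟨2*i.val, by have := i.isLt; omega⟩ =
      ⟨2*(π i).val, by have := (π i).isLt; omega⟩ := by
  have := doublePerm_apply π i 0
  simpa using this

lemma doublePerm_apply₁ (π : Equiv.Perm (Fin k)) (i : Fin k) :
    doublePerm π ⟨2*i.val+1, by have := i.isLt; omega⟩ =
      ⟨2*(π i).val+1, by have := (π i).isLt; omega⟩ := by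
  have := doublePerm_apply π i 1
  simpa using this

lemma T_reindex (X Y : Matrix (Fin (2*k)) (Fin (2*k)) ℝ) (S : Finset (Fin k)) :
    (∑ σ : Equiv.Perm (Fin (2*k)), ((Equiv.Perm.sign σ : ℤ) : ℝ) *
       ∏ i : Fin k, (if i ∈ S then X else Y)
         (σ ⟨2*i.val, by have := i.isLt; omega⟩)
         (σ ⟨2*i.val+1, by have := i.isLt; omega⟩)) =
    (∑ σ : Equiv.Perm (Fin (2*k)), ((Equiv.Perm.sign σ : ℤ) : ℝ) *
       ∏ i : Fin k, (if i.val < S.card then X else Y)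
         (σ ⟨2*i.val, by have := i.isLt; omega⟩)
         (σ ⟨2*i.val+1, by have := i.isLt; omega⟩)) := by
  classical
  have hτ : Equiv.Perm.sign (doublePerm (blockPerm S)) = 1 := sign_doublePerm _
  apply Fintype.sum_equiv (Equiv.mulRight (doublePerm (blockPerm S)))
  intro σ
  have h1 : Equiv.Perm.sign (Equiv.mulRight (doublePerm (blockPerm S)) σ) =
      Equiv.Perm.sign σ := by
    show Equiv.Perm.sign (σ * doublePerm (blockPerm S)) = _
    rw [_root_.map_mul, hτ, mul_one]
  rw [h1]
  congr 1
  rw [← Equiv.prod_comp (blockPerm S)]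
  apply Finset.prod_congr rfl
  intro i _
  have hmul : ∀ (x : Fin (2*k)), (Equiv.mulRight (doublePerm (blockPerm S)) σ) x =
      σ ((doublePerm (blockPerm S)) x) := fun x => rfl
  rw [hmul, hmul, doublePerm_apply₀, doublePerm_apply₁]
  simp only [blockPerm_mem_iff]

end Key5

/-- **expansion of the Pfaffian.** For real antisymmetric `2k×2k` matrices
`X, Y`: `Pf(X+Y) = Σ_J ε(J,J′) Pf(X_J) Pf(Y_{J′})`, summing over all subsets `J` of even
cardinality, `J′ = Jᶜ`, with `X_J` the principal submatrix on `J` and `ε(J,J′)` the sign of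
the permutation listing `J` increasingly then `J′` increasingly. -/
theorem pfaffian_add_expansion (k : ℕ) (X Y : Matrix (Fin (2 * k)) (Fin (2 * k)) ℝ)
    (hX : Xᵀ = -X) (hY : Yᵀ = -Y) :
    pfaffian (X + Y) =
      ∑ J ∈ Finset.univ.filter (fun J : Finset (Fin (2 * k)) => Even J.card),
        ((Equiv.Perm.sign (blockPerm J) : ℤ) : ℝ) *
          pfaffian (principalSubmatrix X J) * pfaffian (principalSubmatrix Y Jᶜ) := by
  classical
  rw [pfaffian_eq_pfS]
  -- Step A : expand the product of sums
  have stepA : pfS k (X + Y) = ∑ S : Finset (Fin k),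
      ∑ σ : Equiv.Perm (Fin (2*k)), ((Equiv.Perm.sign σ : ℤ) : ℝ) *
        ∏ i : Fin k, (if i ∈ S then X else Y)
          (σ ⟨2*i.val, by have := i.isLt; omega⟩)
          (σ ⟨2*i.val+1, by have := i.isLt; omega⟩) := by
    rw [pfS, Finset.sum_comm]
    apply Finset.sum_congr rfl
    intro σ _
    have hexp : (∏ i : Fin k, (X + Y)
        (σ ⟨2*i.val, by have := i.isLt; omega⟩)
        (σ ⟨2*i.val+1, by have := i.isLt; omega⟩)) =
        ∑ S : Finset (Fin k), ∏ i : Fin k, (if i ∈ S then X else Y)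
          (σ ⟨2*i.val, by have := i.isLt; omega⟩)
          (σ ⟨2*i.val+1, by have := i.isLt; omega⟩) := by
      simp only [Matrix.add_apply]
      rw [Finset.prod_add, Finset.powerset_univ]
      apply Finset.sum_congr rfl
      intro S _
      symm
      trans (∏ i : Fin k, (if i ∈ S then
          X (σ ⟨2*i.val, by have := i.isLt; omega⟩) (σ ⟨2*i.val+1, by have := i.isLt; omega⟩)
        else
          Y (σ ⟨2*i.val, by have := i.isLt; omega⟩) (σ ⟨2*i.val+1, by have := i.isLt; omega⟩)))
      · exact Finset.prod_congr rfl (fun i _ => by split <;> rfl)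
      · rw [Finset.prod_ite]
        congr 1
        · exact Finset.prod_congr (Finset.filter_univ_mem S) (fun _ _ => rfl)
        · refine Finset.prod_congr ?_ (fun _ _ => rfl)
          rw [Finset.filter_not, Finset.filter_univ_mem]
    rw [hexp, Finset.mul_sum]
  rw [stepA]
  -- Step B : reindex each subset to an initial segment
  have stepB : ∀ S : Finset (Fin k),
      (∑ σ : Equiv.Perm (Fin (2*k)), ((Equiv.Perm.sign σ : ℤ) : ℝ) *
        ∏ i : Fin k, (if i ∈ S then X else Y)
          (σ ⟨2*i.val, by have := i.isLt; omega⟩)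
          (σ ⟨2*i.val+1, by have := i.isLt; omega⟩)) =
      (∑ σ : Equiv.Perm (Fin (2*k)), ((Equiv.Perm.sign σ : ℤ) : ℝ) *
        ∏ i : Fin k, (if i.val < S.card then X else Y)
          (σ ⟨2*i.val, by have := i.isLt; omega⟩)
          (σ ⟨2*i.val+1, by have := i.isLt; omega⟩)) := fun S => T_reindex X Y S
  simp only [stepB]
  -- Step C : group subsets by cardinality
  have stepC : (∑ S : Finset (Fin k),
      (∑ σ : Equiv.Perm (Fin (2*k)), ((Equiv.Perm.sign σ : ℤ) : ℝ) *
        ∏ i : Fin k, (if i.val < S.card then X else Y)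
          (σ ⟨2*i.val, by have := i.isLt; omega⟩)
          (σ ⟨2*i.val+1, by have := i.isLt; omega⟩))) =
      ∑ m ∈ Finset.range (k+1), ((Nat.choose k m : ℕ) : ℝ) *
        (∑ σ : Equiv.Perm (Fin (2*k)), ((Equiv.Perm.sign σ : ℤ) : ℝ) *
          ∏ i : Fin k, (if i.val < m then X else Y)
            (σ ⟨2*i.val, by have := i.isLt; omega⟩)
            (σ ⟨2*i.val+1, by have := i.isLt; omega⟩)) := by
    rw [← Finset.sum_fiberwise_of_maps_to (g := Finset.card) (t := Finset.range (k+1))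
      (fun S _ => by
        simp only [Finset.mem_range]
        have := Finset.card_le_univ S
        simp only [Finset.card_univ, Fintype.card_fin] at this
        omega)]
    apply Finset.sum_congr rfl
    intro m _
    rw [Finset.sum_congr rfl (fun S hS => by
      rw [(Finset.mem_filter.mp hS).2]), Finset.sum_const]
    have hcard : (Finset.univ.filter (fun S : Finset (Fin k) => S.card = m)).card =
        Nat.choose k m := by
      rw [show (Finset.univ.filter (fun S : Finset (Fin k) => S.card = m)) =
        Finset.powersetCard m Finset.univ from by
          rw [Finset.powersetCard_eq_filter, Finset.powerset_univ]]
      rw [Finset.card_powersetCard, Finset.card_univ, Fintype.card_fin]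
    rw [hcard, nsmul_eq_mul]
  rw [stepC, Finset.mul_sum]
  -- Step D : apply T_eq for each m and simplify the constants
  have stepD : ∀ m ∈ Finset.range (k+1),
      (1 / (2 ^ k * (Nat.factorial k) : ℝ)) * (((Nat.choose k m : ℕ) : ℝ) *
        (∑ σ : Equiv.Perm (Fin (2*k)), ((Equiv.Perm.sign σ : ℤ) : ℝ) *
          ∏ i : Fin k, (if i.val < m then X else Y)
            (σ ⟨2*i.val, by have := i.isLt; omega⟩)
            (σ ⟨2*i.val+1, by have := i.isLt; omega⟩))) =
      ∑ J ∈ Finset.univ.filter (fun J : Finset (Fin (2*k)) => J.card = 2*m),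
        ((Equiv.Perm.sign (blockPerm J) : ℤ) : ℝ) *
          pfaffian (principalSubmatrix X J) * pfaffian (principalSubmatrix Y Jᶜ) := by
    intro m hm
    have hmk : m ≤ k := by
      simp only [Finset.mem_range] at hm; omega
    rw [T_eq hmk X Y, Finset.mul_sum, Finset.mul_sum]
    apply Finset.sum_congr rfl
    intro J _
    have hch : ((Nat.choose k m * Nat.factorial m * Nat.factorial (k-m) : ℕ) : ℝ) =
        ((Nat.factorial k : ℕ) : ℝ) := by
      rw [Nat.choose_mul_factorial_mul_factorial hmk]
    have h2 : (2:ℝ)^m * (2:ℝ)^(k-m) = 2^k := by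
      rw [← pow_add]; congr 1; omega
    have hkey : ((2:ℝ)^k * ((Nat.factorial k : ℕ) : ℝ)) =
        ((Nat.choose k m : ℕ) : ℝ) *
          (((2:ℝ)^m * ((Nat.factorial m : ℕ) : ℝ)) *
           ((2:ℝ)^(k-m) * ((Nat.factorial (k-m) : ℕ) : ℝ))) := by
      rw [← hch, ← h2]; push_cast; ring
    have hc0 : ((Nat.choose k m : ℕ) : ℝ) ≠ 0 :=
      Nat.cast_ne_zero.mpr (Nat.choose_pos hmk).ne'
    have hA : ((2:ℝ)^m * ((Nat.factorial m : ℕ) : ℝ)) ≠ 0 := by positivity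
    have hB : ((2:ℝ)^(k-m) * ((Nat.factorial (k-m) : ℕ) : ℝ)) ≠ 0 := by positivity
    rw [hkey]
    field_simp
  rw [Finset.sum_congr rfl stepD]
  -- Step E : regroup the double sum as a sum over subsets of even cardinality
  rw [← Finset.sum_fiberwise_of_maps_to (g := fun J : Finset (Fin (2*k)) => J.card / 2)
    (t := Finset.range (k+1))
    (fun J _ => by
      simp only [Finset.mem_range]
      have := card_le_n J
      omega)]
  apply Finset.sum_congr rfl
  intro m _
  congr 1
  ext J
  simp only [Finset.mem_filter, Finset.mem_univ, true_and, Nat.even_iff]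
  omega
end
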